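/- arXiv:2409.01655 — 4 statements merged into one kernel-verified Lean document; each statement's English description precedes it below -/
import Mathlib

section
/- Let X be a Stone space and let 𝒰 be a basis of clopen sets for the topology of X with the property that any two members of 𝒰 are either nested (one contained in the other) or disjoint. Then every clopen subset C ⊆ X can be written as a finite disjoint union of members of 𝒰. -/
/-! A clopen set in a compact space is compact and open, so it is covered by finitely many basis
sets contained in it. Among finitely many pairwise nested-or-disjoint sets, the maximal ones are
pairwise disjoint and still cover the union. -/

open Set TopologicalSpace

theorem TopologicalSpace.IsTopologicalBasis.exists_finset_sUnion_eq_of_isCompact_of_isOpen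
    {X : Type*} [TopologicalSpace X] {𝒰 : Set (Set X)} (h𝒰 : IsTopologicalBasis 𝒰)
    {K : Set X} (hKc : IsCompact K) (hKo : IsOpen K) :
    ∃ F : Finset (Set X), ↑F ⊆ 𝒰 ∧ K = ⋃₀ ↑F := by
  have hcover : K ⊆ ⋃ U ∈ {U ∈ 𝒰 | U ⊆ K}, id U :=
    (h𝒰.open_eq_sUnion' hKo).subset.trans sUnion_eq_biUnion.subset
  obtain ⟨𝒮, h𝒮, hfin, hK𝒮⟩ :=
    hKc.elim_finite_subcover_image (fun U hU => h𝒰.isOpen hU.1) hcover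
  refine ⟨hfin.toFinset, ?_, ?_⟩ <;> rw [hfin.coe_toFinset]
  · exact fun U hU => (h𝒮 hU).1
  · rw [sUnion_eq_biUnion]
    exact hK𝒮.antisymm (iUnion₂_subset fun U hU => (h𝒮 hU).2)

theorem Set.pairwiseDisjoint_setOf_maximal_of_nested {α : Type*} {𝒮 : Set (Set α)}
    (hnested : ∀ U ∈ 𝒮, ∀ V ∈ 𝒮, U ⊆ V ∨ V ⊆ U ∨ U ∩ V = ∅) :
    {U | Maximal (· ∈ 𝒮) U}.PairwiseDisjoint id := by
  intro U hU V hV hUV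
  rcases hnested U hU.prop V hV.prop with hle | hle | hdisj
  · exact absurd (hU.eq_of_le hV.prop hle) hUV
  · exact absurd (hV.eq_of_le hU.prop hle).symm hUV
  · exact disjoint_iff_inter_eq_empty.2 hdisj

theorem Set.Finite.sUnion_setOf_maximal {α : Type*} {𝒮 : Set (Set α)} (h𝒮 : 𝒮.Finite) :
    ⋃₀ {U | Maximal (· ∈ 𝒮) U} = ⋃₀ 𝒮 := by
  refine (sUnion_mono fun U hU => hU.prop).antisymm (sUnion_subset fun U hU => ?_)
  obtain ⟨V, hUV, hV⟩ := h𝒮.exists_le_maximal hU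
  exact hUV.trans (subset_sUnion_of_mem hV)

theorem clopen_eq_finite_disjoint_union_of_nested_basis_general {X : Type*} [TopologicalSpace X]
    [CompactSpace X] (𝒰 : Set (Set X))
    (h𝒰 : TopologicalSpace.IsTopologicalBasis 𝒰)
    (hnested : ∀ U₁ ∈ 𝒰, ∀ U₂ ∈ 𝒰, U₁ ⊆ U₂ ∨ U₂ ⊆ U₁ ∨ U₁ ∩ U₂ = ∅)
    (C : Set X) (hC : IsClopen C) :
    ∃ F : Finset (Set X), ↑F ⊆ 𝒰 ∧ (F : Set (Set X)).PairwiseDisjoint id ∧ C = ⋃₀ ↑F := by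
  obtain ⟨F, hF𝒰, hCF⟩ :=
    h𝒰.exists_finset_sUnion_eq_of_isCompact_of_isOpen hC.isClosed.isCompact hC.isOpen
  have hfin : {U | Maximal (· ∈ (F : Set (Set X))) U}.Finite :=
    F.finite_toSet.subset fun U hU => hU.prop
  refine ⟨hfin.toFinset, ?_, ?_, ?_⟩ <;> rw [hfin.coe_toFinset]
  · exact fun U hU => hF𝒰 hU.prop
  · exact pairwiseDisjoint_setOf_maximal_of_nested fun U hU V hV =>
      hnested U (hF𝒰 hU) V (hF𝒰 hV)
  · rw [F.finite_toSet.sUnion_setOf_maximal, hCF]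

/-- Let `X` be a Stone space and `𝒰` a basis of clopen sets for its topology
such that any two members of `𝒰` are either nested or disjoint. Then every clopen subset
`C ⊆ X` is a finite *disjoint* union of members of `𝒰`. -/
theorem clopen_eq_finite_disjoint_union_of_nested_basis {X : Type*} [TopologicalSpace X]
    [CompactSpace X] [T2Space X] [TotallyDisconnectedSpace X] (𝒰 : Set (Set X))
    (h𝒰 : TopologicalSpace.IsTopologicalBasis 𝒰) (hclopen : ∀ U ∈ 𝒰, IsClopen U)
    (hnested : ∀ U₁ ∈ 𝒰, ∀ U₂ ∈ 𝒰, U₁ ⊆ U₂ ∨ U₂ ⊆ U₁ ∨ U₁ ∩ U₂ = ∅)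
    (C : Set X) (hC : IsClopen C) :
    ∃ F : Finset (Set X), ↑F ⊆ 𝒰 ∧ (F : Set (Set X)).PairwiseDisjoint id ∧ C = ⋃₀ ↑F :=
  clopen_eq_finite_disjoint_union_of_nested_basis_general 𝒰 h𝒰 hnested C hC
end

section
/- Let G ≤ Aut T be a branch group acting on a spherically homogeneous rooted tree T, and let H ≤ G be a subgroup with finitely many conjugates in G (i.e., its normalizer has finite index in G). Then the support Supp(H) ⊆ ∂T is a clopen subset of the boundary. -/
open TopologicalSpace

/-! Model of a spherically homogeneous rooted tree `T`: the tree is determined by the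
sequence of branching index sets `X 0, X 1, X 2, …` (all vertices at level `n` have the
same set `X n` of children, each `X n` finite and nonempty).  Vertices are finite words,
the boundary `∂T` is the set of infinite words, with the topology generated by cone sets. -/

variable (X : ℕ → Type) [∀ n, Fintype (X n)] [∀ n, Nonempty (X n)]

/-- The boundary `∂T`: infinite rays from the root. -/
abbrev Boundary := ∀ n, X n

/-- The topology on `∂T` generated by the cone sets: the product of discrete topologies. -/
instance : TopologicalSpace (Boundary X) := @Pi.topologicalSpace ℕ X fun _ => ⊥

/-- Vertices at level `n`: words of length `n`. -/
abbrev Word (n : ℕ) := ∀ i : Fin n, X i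

/-- A vertex of `T`: a finite word. -/
abbrev Vertex := Σ n, Word X n

/-- The cone set `C_v ⊆ ∂T` of rays passing through the vertex `v`. -/
def Cone (v : Vertex X) : Set (Boundary X) := {γ | ∀ i : Fin v.1, γ i = v.2 i}

/-- `w` is a descendant of `v` (or equal to it). -/
def IsDescendant (w v : Vertex X) : Prop :=
  ∃ h : v.1 ≤ w.1, ∀ i : Fin v.1, w.2 (Fin.castLE h i) = v.2 i

/-- Two vertices are incomparable if neither is a descendant of the other. -/
def Incomparable (v w : Vertex X) : Prop := ¬ IsDescendant X v w ∧ ¬ IsDescendant X w v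

/-- A permutation of the boundary is induced by an automorphism of the rooted tree `T`
iff it preserves the relation "agreeing up to level `n`" for every `n`. -/
def IsTreeAut (g : Equiv.Perm (Boundary X)) : Prop :=
  ∀ (n : ℕ) (γ δ : Boundary X), (∀ i : Fin n, γ i = δ i) ↔ (∀ i : Fin n, g γ i = g δ i)

/-- The support of a subgroup `H ≤ Aut T`: the boundary points moved by some element of `H`. -/
def SuppSet (H : Subgroup (Equiv.Perm (Boundary X))) : Set (Boundary X) :=
  {γ | ∃ h ∈ H, h γ ≠ γ}

/-- The rigid vertex stabilizer `rist_G(v)`: elements of `G` supported on the cone `C_v`. -/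
def rist (G : Subgroup (Equiv.Perm (Boundary X))) (v : Vertex X) :
    Subgroup (Equiv.Perm (Boundary X)) where
  carrier := {g | g ∈ G ∧ ∀ γ, γ ∉ Cone X v → g γ = γ}
  one_mem' := ⟨G.one_mem, fun _ _ => rfl⟩
  mul_mem' := by
    rintro a b ⟨haG, ha⟩ ⟨hbG, hb⟩
    refine ⟨G.mul_mem haG hbG, fun γ hγ => ?_⟩
    simp only [Equiv.Perm.mul_apply, hb γ hγ, ha γ hγ]
  inv_mem' := by
    rintro a ⟨haG, ha⟩
    refine ⟨G.inv_mem haG, fun γ hγ => ?_⟩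
    conv_lhs => rw [← ha γ hγ]
    simp

/-- The rigid level stabilizer `Rist_G(n) = ∏_{v ∈ level n} rist_G(v)` (the subgroup
generated by the pairwise-commuting rigid vertex stabilizers at level `n`). -/
def RistLevel (G : Subgroup (Equiv.Perm (Boundary X))) (n : ℕ) :
    Subgroup (Equiv.Perm (Boundary X)) :=
  ⨆ w : Word X n, rist X G ⟨n, w⟩

/-- `G` acts transitively on every level of `T`. -/
def LevelTransitive (G : Subgroup (Equiv.Perm (Boundary X))) : Prop :=
  ∀ (n : ℕ) (w w' : Word X n), ∃ g ∈ G,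
    (fun γ => g γ) '' Cone X ⟨n, w⟩ = Cone X ⟨n, w'⟩

/-- `G ≤ Aut T` is a branch group: level-transitive with all rigid level stabilizers of
finite index. -/
def IsBranch (G : Subgroup (Equiv.Perm (Boundary X))) : Prop :=
  (∀ g ∈ G, IsTreeAut X g) ∧ LevelTransitive X G ∧ ∀ n, (RistLevel X G n).relIndex G ≠ 0

/-- `G ≤ Aut T` is a weakly branch group: level-transitive with all rigid level
stabilizers nontrivial. -/
def IsWeaklyBranch (G : Subgroup (Equiv.Perm (Boundary X))) : Prop :=
  (∀ g ∈ G, IsTreeAut X g) ∧ LevelTransitive X G ∧ ∀ n, RistLevel X G n ≠ ⊥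

/-- The vertex `v` is moved by some element of `H`. -/
def MovesVertex (H : Subgroup (Equiv.Perm (Boundary X))) (v : Vertex X) : Prop :=
  ∃ h ∈ H, (fun γ => h γ) '' Cone X v ≠ Cone X v

section GroupTheory

variable {P : Type*} [Group P]

/-- The `k`-th derived subgroup of a subgroup `H` of an ambient group `P`. -/
def derivedSub (H : Subgroup P) : ℕ → Subgroup P
  | 0 => H
  | n + 1 => ⁅derivedSub H n, derivedSub H n⁆

/-- `H` is `k`-subnormal in `G`: there is a chain `H = H₀ ⊴ H₁ ⊴ ⋯ ⊴ H_k = G`. -/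
def IsKSubnormalIn (G H : Subgroup P) (k : ℕ) : Prop :=
  ∃ c : ℕ → Subgroup P, c 0 = H ∧ c k = G ∧
    ∀ i < k, c i ≤ c (i + 1) ∧ ∀ g ∈ c (i + 1), ∀ h ∈ c i, g * h * g⁻¹ ∈ c i

/-- `H` is subnormal in `G`. -/
def IsSubnormalIn (G H : Subgroup P) : Prop := ∃ k, IsKSubnormalIn G H k

/-- `A ≤_va B`: `A ≤ B` and `A` contains the commutator subgroup of a finite-index
subgroup of `B`. -/
def vaLE (A B : Subgroup P) : Prop :=
  A ≤ B ∧ ∃ K : Subgroup P, K ≤ B ∧ K.relIndex B ≠ 0 ∧ ⁅K, K⁆ ≤ A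

/-- The congruence `∼` defining the structure lattice: `A ∼ B` iff `A ∩ B ≤_va A, B`. -/
def structEquiv (A B : Subgroup P) : Prop := vaLE (A ⊓ B) A ∧ vaLE (A ⊓ B) B

/-- `H` belongs to `L(G)` (relative to the ambient group `P`): `H` is a subnormal subgroup
of `G` whose normalizer has finite index in `G`. -/
def InL (G H : Subgroup P) : Prop :=
  H ≤ G ∧ IsSubnormalIn G H ∧ (Subgroup.normalizer (H : Set P)).relIndex G ≠ 0

/-- The conjugate subgroup `H^g = g H g⁻¹`. -/
def conjSub (g : P) (H : Subgroup P) : Subgroup P :=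
  H.map (MulAut.conj g).toMonoidHom

end GroupTheory

theorem Equiv.Perm.apply_inv_self {α : Type*} (f : Equiv.Perm α) (x : α) : f (f⁻¹ x) = x :=
  f.apply_symm_apply x

theorem Equiv.Perm.inv_apply_self {α : Type*} (f : Equiv.Perm α) (x : α) : f⁻¹ (f x) = x :=
  f.symm_apply_apply x

/-! ### Auxiliary development for Statement 14 -/

section Statement14Aux

variable {X}

namespace St14

/-- Agreement of two rays up to level `n`. -/
def Ag (n : ℕ) (γ δ : Boundary X) : Prop := ∀ i : Fin n, γ i = δ i

lemma ag_refl (n : ℕ) (γ : Boundary X) : Ag n γ γ := fun _ => rfl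

lemma ag_symm {n : ℕ} {γ δ : Boundary X} (h : Ag n γ δ) : Ag n δ γ := fun i => (h i).symm

lemma ag_trans {n : ℕ} {γ δ ε : Boundary X} (h1 : Ag n γ δ) (h2 : Ag n δ ε) : Ag n γ ε :=
  fun i => (h1 i).trans (h2 i)

lemma ag_mono {m n : ℕ} (hmn : m ≤ n) {γ δ : Boundary X} (h : Ag n γ δ) : Ag m γ δ :=
  fun i => h ⟨i.1, lt_of_lt_of_le i.2 hmn⟩

/-- Membership in `rist` unfolded. -/
lemma mem_rist {G : Subgroup (Equiv.Perm (Boundary X))} {v : Vertex X}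
    {x : Equiv.Perm (Boundary X)} :
    x ∈ rist X G v ↔ x ∈ G ∧ ∀ γ, γ ∉ Cone X v → x γ = γ := Iff.rfl

/-- The rigid stabilizer of the level-`n` vertex lying on the ray `δ`. -/
def RR (G : Subgroup (Equiv.Perm (Boundary X))) (n : ℕ) (δ : Boundary X) :
    Subgroup (Equiv.Perm (Boundary X)) := rist X G ⟨n, fun i => δ i⟩

lemma mem_RR {G : Subgroup (Equiv.Perm (Boundary X))} {n : ℕ} {δ : Boundary X}
    {x : Equiv.Perm (Boundary X)} :
    x ∈ RR G n δ ↔ x ∈ G ∧ ∀ γ, ¬ Ag n γ δ → x γ = γ := Iff.rfl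

lemma moved_ag {G : Subgroup (Equiv.Perm (Boundary X))} {n : ℕ} {δ ζ : Boundary X}
    {x : Equiv.Perm (Boundary X)} (hx : x ∈ RR G n δ) (h : x ζ ≠ ζ) : Ag n ζ δ := by
  by_contra hc
  exact h ((mem_RR.mp hx).2 ζ hc)

lemma RR_mono {G : Subgroup (Equiv.Perm (Boundary X))} {m n : ℕ} {ε δ : Boundary X}
    {x : Equiv.Perm (Boundary X)} (hx : x ∈ RR G n ε) (hmn : m ≤ n) (hεδ : Ag m ε δ) :
    x ∈ RR G m δ := by
  refine mem_RR.mpr ⟨(mem_RR.mp hx).1, fun γ hγ => (mem_RR.mp hx).2 γ fun hAg => ?_⟩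
  exact hγ (ag_trans (ag_mono hmn hAg) hεδ)

lemma RR_congr {G : Subgroup (Equiv.Perm (Boundary X))} {L : ℕ} {β β' : Boundary X}
    (h : Ag L β β') : RR G L β = RR G L β' := by
  ext x
  simp only [mem_RR]
  constructor
  · rintro ⟨h1, h2⟩
    exact ⟨h1, fun γ hγ => h2 γ fun hag => hγ (ag_trans hag h)⟩
  · rintro ⟨h1, h2⟩
    exact ⟨h1, fun γ hγ => h2 γ fun hag => hγ (ag_trans hag (ag_symm h))⟩

/-- The element `g` maps the level-`L` cone of `ε` fully off itself. -/
def MOff (g : Equiv.Perm (Boundary X)) (L : ℕ) (ε : Boundary X) : Prop :=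
  ∀ ζ, Ag L ζ ε → ¬ Ag L (g ζ) ε

lemma moff_of_diff {g : Equiv.Perm (Boundary X)} (hg : IsTreeAut X g) {ε : Boundary X}
    {j L : ℕ} (hj : g ε j ≠ ε j) (hjL : j < L) : MOff g L ε := by
  intro ζ hζ hcon
  have h1 : Ag L (g ζ) (g ε) := (hg L ζ ε).mp hζ
  exact hj ((h1 ⟨j, hjL⟩).symm.trans (hcon ⟨j, hjL⟩))

lemma exists_diff {g : Equiv.Perm (Boundary X)} {ε : Boundary X} (h : g ε ≠ ε) :
    ∃ j, g ε j ≠ ε j := by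
  by_contra hc
  push_neg at hc
  exact h (funext hc)

lemma exists_moved {g : Equiv.Perm (Boundary X)} (h : g ≠ 1) : ∃ ε, g ε ≠ ε := by
  by_contra hc
  push_neg at hc
  exact h (Equiv.ext hc)

/-- Pointwise form of level transitivity, with both directions of the cone bijection. -/
lemma trans_cones {G : Subgroup (Equiv.Perm (Boundary X))} (htr : LevelTransitive X G)
    (n : ℕ) (γ δ : Boundary X) :
    ∃ g ∈ G, (∀ ζ, Ag n ζ γ → Ag n (g ζ) δ) ∧ (∀ ζ, Ag n (g ζ) δ → Ag n ζ γ) := by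
  obtain ⟨g, hgG, himg⟩ := htr n (fun i => γ i) (fun i => δ i)
  refine ⟨g, hgG, fun ζ hζ => ?_, fun ζ hζ => ?_⟩
  · have : g ζ ∈ Cone X ⟨n, fun i => δ i⟩ := by
      rw [← himg]
      exact ⟨ζ, hζ, rfl⟩
    exact this
  · have hmem : g ζ ∈ Cone X ⟨n, fun i => δ i⟩ := hζ
    rw [← himg] at hmem
    obtain ⟨ξ, hξ, hgξ⟩ := hmem
    have hξζ : ξ = ζ := g.injective hgξ
    rw [← hξζ]
    exact hξ

lemma trans_point {G : Subgroup (Equiv.Perm (Boundary X))} (htr : LevelTransitive X G)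
    (n : ℕ) (γ δ : Boundary X) : ∃ g ∈ G, Ag n (g γ) δ := by
  obtain ⟨g, hgG, h1, _⟩ := trans_cones htr n γ δ
  exact ⟨g, hgG, h1 γ (ag_refl n γ)⟩

end St14

end Statement14Aux
section Statement14Grp

/-- The commutator `a b a⁻¹ b⁻¹`. -/
def St14.c2 {M : Type*} [Group M] (a b : M) : M := a * b * a⁻¹ * b⁻¹

namespace St14

lemma c2_eq_one_iff {M : Type*} [Group M] {a b : M} : c2 a b = 1 ↔ a * b = b * a := by
  have h : c2 a b = (a * b) * (b * a)⁻¹ := by unfold c2; group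
  rw [h, mul_inv_eq_one]

lemma c2_mem {M : Type*} [Group M] {S : Subgroup M} {a b : M} (ha : a ∈ S) (hb : b ∈ S) :
    c2 a b ∈ S :=
  S.mul_mem (S.mul_mem (S.mul_mem ha hb) (S.inv_mem ha)) (S.inv_mem hb)

lemma comm_of_inv_comm {M : Type*} [Group M] {x y : M} (h : x⁻¹ * y = y * x⁻¹) :
    x * y = y * x := by
  have hc : Commute x⁻¹ y := h
  have hc2 := hc.inv_left
  rw [inv_inv] at hc2
  exact hc2.eq

end St14

end Statement14Grp

section Statement14Aux2
set_option linter.unusedSectionVars false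

variable {X}

namespace St14

lemma commute_of_disj {a u : Equiv.Perm (Boundary X)}
    (h : ∀ ζ, u ζ ≠ ζ → a ζ = ζ) : u * a = a * u := by
  have hd : Equiv.Perm.Disjoint u a := fun ζ => or_iff_not_imp_left.mpr (h ζ)
  exact hd.commute.eq

/-- The basic commutator identity for an element `k` moving the cone of `ε` off itself
and `a`, `b` supported inside that cone. -/
lemma grig_identity {k a b : Equiv.Perm (Boundary X)} {L : ℕ} {ε : Boundary X}
    (hmov : MOff k L ε)
    (ha : ∀ ζ, a ζ ≠ ζ → Ag L ζ ε) (hb : ∀ ζ, b ζ ≠ ζ → Ag L ζ ε) :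
    c2 (c2 k a) b = c2 a⁻¹ b := by
  set u : Equiv.Perm (Boundary X) := k * a * k⁻¹ with hu
  have husupp : ∀ ζ, u ζ ≠ ζ → ¬ Ag L ζ ε := by
    intro ζ hζ
    have h1 : a (k⁻¹ ζ) ≠ k⁻¹ ζ := by
      intro hcon
      apply hζ
      have he : u ζ = k (a (k⁻¹ ζ)) := by
        simp [hu, Equiv.Perm.mul_apply]
      rw [he, hcon]
      exact Equiv.Perm.apply_inv_self k ζ
    have h2 : Ag L (k⁻¹ ζ) ε := ha _ h1
    have h3 := hmov _ h2
    rwa [Equiv.Perm.apply_inv_self k ζ] at h3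
  have hcomm : u * (a⁻¹ * b * a) = (a⁻¹ * b * a) * u := by
    apply commute_of_disj
    intro ζ hζ
    by_contra hne
    have hag : Ag L ζ ε := by
      rcases em (a ζ = ζ) with h'|h'
      · have hbζ : b ζ ≠ ζ := by
          intro hbz
          apply hne
          have : (a⁻¹ * b * a) ζ = a⁻¹ (b (a ζ)) := by
            simp [Equiv.Perm.mul_apply]
          rw [this, h', hbz]
          conv_lhs => rw [← h']
          exact Equiv.Perm.inv_apply_self a ζ
        exact hb ζ hbζ
      · exact ha ζ h'
    exact husupp ζ hζ hag
  have h1 : c2 (c2 k a) b = u * (a⁻¹ * b * a) * u⁻¹ * b⁻¹ := by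
    unfold c2
    rw [hu]
    group
  rw [h1, hcomm]
  unfold c2
  group

/-- If `k` moves the cone of `ε` off itself and commutes with `a ∈ rist`, then `a = 1`. -/
lemma kill {G : Subgroup (Equiv.Perm (Boundary X))} {k a : Equiv.Perm (Boundary X)}
    {L : ℕ} {ε : Boundary X}
    (hmov : MOff k L ε) (ha : a ∈ RR G L ε) (hc : k * a = a * k) : a = 1 := by
  by_contra hne
  obtain ⟨ζ, hζ⟩ := exists_moved hne
  have hag : Ag L ζ ε := moved_ag ha hζ
  have h' : a * k⁻¹ = k⁻¹ * a := by
    have hcc : Commute k a := hc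
    exact hcc.inv_left.eq.symm
  have h2 : a (k⁻¹ ζ) = k⁻¹ (a ζ) := by
    have := DFunLike.congr_fun h' ζ
    simpa [Equiv.Perm.mul_apply] using this
  have h3 : a (k⁻¹ ζ) ≠ k⁻¹ ζ := by
    rw [h2]
    intro hcon
    exact hζ (k⁻¹.injective hcon)
  have h4 : Ag L (k⁻¹ ζ) ε := moved_ag ha h3
  have h5 := hmov _ h4
  rw [Equiv.Perm.apply_inv_self k ζ] at h5
  exact h5 hag

end St14

end Statement14Aux2
section Statement14Aux3
set_option linter.unusedSectionVars false

variable {X}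

namespace St14

/-- In an infinite branch group every rigid vertex stabilizer is nontrivial. -/
lemma rist_nontrivial {G : Subgroup (Equiv.Perm (Boundary X))} (hG : IsBranch X G)
    (hInf : Infinite ↥G) :
    ∀ (L : ℕ) (δ : Boundary X), ∃ x, x ∈ RR G L δ ∧ x ≠ 1 := by
  obtain ⟨hta, htr, hrel⟩ := hG
  intro L δ
  have h1 : ∃ w : Word X L, rist X G ⟨L, w⟩ ≠ ⊥ := by
    by_contra hc
    push_neg at hc
    have hbot : RistLevel X G L = ⊥ := by
      rw [RistLevel]
      exact iSup_eq_bot.mpr hc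
    have h2 := hrel L
    rw [hbot, Subgroup.relIndex_bot_left] at h2
    exact h2 Nat.card_eq_zero_of_infinite
  obtain ⟨w₀, hw₀⟩ := h1
  obtain ⟨x₀, hx₀mem, hx₀⟩ : ∃ x ∈ rist X G ⟨L, w₀⟩, x ≠ 1 := by
    by_contra hc
    push_neg at hc
    exact hw₀ ((Subgroup.eq_bot_iff_forall _).mpr hc)
  obtain ⟨g, hgG, himg⟩ := htr L w₀ (fun i => δ i)
  refine ⟨g * x₀ * g⁻¹, mem_RR.mpr ⟨?_, ?_⟩, ?_⟩
  · exact G.mul_mem (G.mul_mem hgG (mem_rist.mp hx₀mem).1) (G.inv_mem hgG)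
  · intro γ hγ
    have hx : x₀ (g⁻¹ γ) = g⁻¹ γ := by
      apply (mem_rist.mp hx₀mem).2
      intro hcone
      apply hγ
      have himg2 : g (g⁻¹ γ) ∈ Cone X ⟨L, fun i => δ i⟩ := by
        rw [← himg]
        exact ⟨g⁻¹ γ, hcone, rfl⟩
      rw [Equiv.Perm.apply_inv_self g γ] at himg2
      exact himg2
    show (g * x₀ * g⁻¹) γ = γ
    rw [Equiv.Perm.mul_apply, Equiv.Perm.mul_apply, hx]
    exact Equiv.Perm.apply_inv_self g γ
  · intro hcon
    apply hx₀
    have : x₀ = g⁻¹ * (g * x₀ * g⁻¹) * g := by group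
    rw [this, hcon]
    group

/-- If infinitely many levels branch, the group `G` is infinite. -/
lemma G_infinite {G : Subgroup (Equiv.Perm (Boundary X))} (htr : LevelTransitive X G)
    (hndeg : ∀ n, ∃ i, n ≤ i ∧ ∃ x y : X i, x ≠ y) : Infinite ↥G := by
  rw [← not_finite_iff_infinite]
  intro hfin
  classical
  have claim : ∀ s : ℕ, ∃ (lam : ℕ) (f : Fin s → Boundary X),
      ∀ a b, a ≠ b → ¬ Ag lam (f a) (f b) := by
    intro s
    induction s with
    | zero => exact ⟨0, Fin.elim0, fun a => a.elim0⟩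
    | succ s ih =>
      obtain ⟨lam, f, hf⟩ := ih
      obtain ⟨i, hilam, x, y, hxy⟩ := hndeg lam
      have β : Boundary X := fun n => Classical.arbitrary (X n)
      refine ⟨i + 1, fun a => if h : a.1 < s then Function.update (f ⟨a.1, h⟩) i x
          else Function.update β i y, ?_⟩
      intro a b hab hAg
      have hii : (i : ℕ) < i + 1 := Nat.lt_succ_self i
      by_cases ha : a.1 < s <;> by_cases hb : b.1 < s
      · apply hf ⟨a.1, ha⟩ ⟨b.1, hb⟩ (fun hEq => by
          have hv : a.1 = b.1 := congrArg (fun z : Fin s => z.1) hEq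
          exact hab (Fin.ext hv))
        intro jj
        have hjlt : (jj : ℕ) < i := lt_of_lt_of_le jj.2 hilam
        have hj2 : (jj : ℕ) < i + 1 := lt_of_lt_of_le hjlt (Nat.le_succ i)
        have h3 := hAg ⟨jj, hj2⟩
        simp only [dif_pos ha, dif_pos hb] at h3
        rwa [Function.update_of_ne (Nat.ne_of_lt hjlt),
          Function.update_of_ne (Nat.ne_of_lt hjlt)] at h3
      · have h3 := hAg ⟨i, hii⟩
        simp only [dif_pos ha, dif_neg hb] at h3
        rw [Function.update_self, Function.update_self] at h3
        exact hxy h3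
      · have h3 := hAg ⟨i, hii⟩
        simp only [dif_neg ha, dif_pos hb] at h3
        rw [Function.update_self, Function.update_self] at h3
        exact hxy h3.symm
      · apply hab
        apply Fin.ext
        have ha' : a.1 = s := by omega
        have hb' : b.1 = s := by omega
        rw [ha', hb']
  obtain ⟨lam, f, hf⟩ := claim (Nat.card ↥G + 1)
  have hβ : Boundary X := fun n => Classical.arbitrary (X n)
  have hgs : ∀ a : Fin (Nat.card ↥G + 1), ∃ g ∈ G, Ag lam (g hβ) (f a) :=
    fun a => trans_point htr lam hβ (f a)
  choose gs hgsG hgsA using hgs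
  have hinj : Function.Injective (fun a => (⟨gs a, hgsG a⟩ : ↥G)) := by
    intro a b hab
    by_contra hne
    apply hf a b hne
    have hval : gs a = gs b := congrArg Subtype.val hab
    have h2 : Ag lam (gs a hβ) (f b) := by
      rw [hval]
      exact hgsA b
    exact ag_trans (ag_symm (hgsA a)) h2
  have hcard := Nat.card_le_card_of_injective _ hinj
  rw [Nat.card_eq_fintype_card, Fintype.card_fin] at hcard
  omega

/-- The normal core construction: a normal (in `G`) finite-index subgroup of the
normalizer of `H`, packaged with a finite transversal. -/
lemma exists_core {G H : Subgroup (Equiv.Perm (Boundary X))}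
    (hnorm : (Subgroup.normalizer (H : Set (Equiv.Perm (Boundary X)))).relIndex G ≠ 0) (hInf : Infinite ↥G) :
    ∃ (Core : Subgroup (Equiv.Perm (Boundary X))) (ι : Type) (_ : Finite ι)
      (rep : ι → Equiv.Perm (Boundary X)),
      (∀ p ∈ Core, p ∈ G) ∧ (∀ p ∈ Core, p ∈ (Subgroup.normalizer (H : Set (Equiv.Perm (Boundary X))))) ∧
      (∀ g ∈ G, ∀ p ∈ Core, g * p * g⁻¹ ∈ Core) ∧ (∃ k ∈ Core, k ≠ 1) ∧
      (∀ g ∈ G, ∃ i, (rep i)⁻¹ * g ∈ Core) := by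
  classical
  set N₀ : Subgroup ↥G := (Subgroup.normalizer (H : Set (Equiv.Perm (Boundary X)))).subgroupOf G with hN₀def
  have hN₀ : N₀.index ≠ 0 := hnorm
  haveI : N₀.FiniteIndex := ⟨hN₀⟩
  set C₀ : Subgroup ↥G := N₀.normalCore with hC₀def
  haveI hCfin : C₀.FiniteIndex := N₀.finiteIndex_normalCore
  have hC₀index : C₀.index ≠ 0 := hCfin.index_ne_zero
  have hQfin : Finite (↥G ⧸ C₀) := by
    rw [Subgroup.index_eq_card] at hC₀index
    exact (Nat.card_ne_zero.mp hC₀index).2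
  refine ⟨C₀.map G.subtype, ↥G ⧸ C₀, hQfin,
    fun q => ((Quotient.out q : ↥G) : Equiv.Perm (Boundary X)), ?_, ?_, ?_, ?_, ?_⟩
  · rintro p hp
    obtain ⟨c, _, rfl⟩ := Subgroup.mem_map.mp hp
    exact c.2
  · rintro p hp
    obtain ⟨c, hc, rfl⟩ := Subgroup.mem_map.mp hp
    have := Subgroup.normalCore_le N₀ hc
    exact (Subgroup.mem_subgroupOf).mp this
  · rintro g hg p hp
    obtain ⟨c, hc, rfl⟩ := Subgroup.mem_map.mp hp
    have hconj : (⟨g, hg⟩ : ↥G) * c * (⟨g, hg⟩ : ↥G)⁻¹ ∈ C₀ :=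
      (Subgroup.normalCore_normal N₀).conj_mem c hc ⟨g, hg⟩
    refine Subgroup.mem_map.mpr ⟨_, hconj, ?_⟩
    rfl
  · have hne : C₀ ≠ ⊥ := by
      intro hbot
      rw [hbot, Subgroup.index_bot, Nat.card_eq_zero_of_infinite] at hC₀index
      exact hC₀index rfl
    obtain ⟨c, hc, hc1⟩ : ∃ c ∈ C₀, c ≠ 1 := by
      by_contra hcon
      push_neg at hcon
      exact hne ((Subgroup.eq_bot_iff_forall _).mpr hcon)
    refine ⟨(c : Equiv.Perm (Boundary X)), Subgroup.mem_map.mpr ⟨c, hc, rfl⟩, ?_⟩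
    intro hcon
    apply hc1
    exact Subtype.ext hcon
  · intro g hg
    refine ⟨QuotientGroup.mk (⟨g, hg⟩ : ↥G), ?_⟩
    have hout : (QuotientGroup.mk (Quotient.out (QuotientGroup.mk (⟨g, hg⟩ : ↥G) : ↥G ⧸ C₀))
        : ↥G ⧸ C₀) = QuotientGroup.mk (⟨g, hg⟩ : ↥G) := QuotientGroup.out_eq' _
    have hmem := QuotientGroup.eq.mp hout
    exact Subgroup.mem_map.mpr ⟨_, hmem, rfl⟩

end St14

end Statement14Aux3
section Statement14Aux4
set_option linter.unusedSectionVars false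
set_option maxHeartbeats 1000000

variable {X}

namespace St14

/-- Grigorchuk's lemma: all commutators of deep rigid stabilizers lie in the normal
finite-index subgroup `Core`. -/
lemma grig {G : Subgroup (Equiv.Perm (Boundary X))}
    (hta : ∀ g ∈ G, IsTreeAut X g) (htr : LevelTransitive X G)
    (Core : Subgroup (Equiv.Perm (Boundary X)))
    (hCG : ∀ p ∈ Core, p ∈ G)
    (hconj : ∀ g ∈ G, ∀ p ∈ Core, g * p * g⁻¹ ∈ Core)
    {k : Equiv.Perm (Boundary X)} (hkC : k ∈ Core) (hk1 : k ≠ 1) :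
    ∃ n₀, ∀ L, n₀ ≤ L → ∀ (δ : Boundary X) (a b : Equiv.Perm (Boundary X)),
      a ∈ RR G L δ → b ∈ RR G L δ → c2 a b ∈ Core := by
  obtain ⟨ε, hε⟩ := exists_moved hk1
  obtain ⟨j, hj⟩ := exists_diff hε
  refine ⟨j + 1, ?_⟩
  intro L hL δ a b ha hb
  have hmov : MOff k L ε :=
    moff_of_diff (hta k (hCG k hkC)) hj (lt_of_lt_of_le (Nat.lt_succ_self j) hL)
  have stepA : ∀ a' b', a' ∈ RR G L ε → b' ∈ RR G L ε → c2 a' b' ∈ Core := by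
    intro a' b' ha' hb'
    have hid := grig_identity (k := k) (a := a'⁻¹) (b := b') hmov
        (fun ζ hz => moved_ag ((RR G L ε).inv_mem ha') hz) (fun ζ hz => moved_ag hb' hz)
    have hxC : c2 k a'⁻¹ ∈ Core := by
      have h1 : a'⁻¹ * k⁻¹ * (a'⁻¹)⁻¹ ∈ Core :=
        hconj _ (G.inv_mem (mem_RR.mp ha').1) _ (Core.inv_mem hkC)
      have h2 : c2 k a'⁻¹ = k * (a'⁻¹ * k⁻¹ * (a'⁻¹)⁻¹) := by unfold c2; group
      rw [h2]
      exact Core.mul_mem hkC h1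
    have hyC : c2 (c2 k a'⁻¹) b' ∈ Core := by
      have h1 : b' * (c2 k a'⁻¹)⁻¹ * b'⁻¹ ∈ Core :=
        hconj _ (mem_RR.mp hb').1 _ (Core.inv_mem hxC)
      have h2 : c2 (c2 k a'⁻¹) b' = (c2 k a'⁻¹) * (b' * (c2 k a'⁻¹)⁻¹ * b'⁻¹) := by
        unfold c2; group
      rw [h2]
      exact Core.mul_mem hxC h1
    rw [hid, inv_inv] at hyC
    exact hyC
  obtain ⟨g, hgG, h1, h2⟩ := trans_cones htr L ε δ
  have pull : ∀ x, x ∈ RR G L δ → g⁻¹ * x * g ∈ RR G L ε := by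
    intro x hx
    refine mem_RR.mpr ⟨G.mul_mem (G.mul_mem (G.inv_mem hgG) (mem_RR.mp hx).1) hgG, ?_⟩
    intro ζ hζ
    have hfix : x (g ζ) = g ζ := by
      apply (mem_RR.mp hx).2
      intro hag
      exact hζ (h2 ζ hag)
    show (g⁻¹ * x * g) ζ = ζ
    simp [Equiv.Perm.mul_apply, hfix]
  have hcin : c2 (g⁻¹ * a * g) (g⁻¹ * b * g) ∈ Core := stepA _ _ (pull a ha) (pull b hb)
  have hrw : c2 a b = g * (c2 (g⁻¹ * a * g) (g⁻¹ * b * g)) * g⁻¹ := by unfold c2; group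
  rw [hrw]
  exact hconj g hgG _ hcin

/-- Core lemma: every point is moved, at arbitrarily deep levels along its own ray, by a
commutator of commutators of the corresponding rigid stabilizer. -/
lemma core_lemma {G : Subgroup (Equiv.Perm (Boundary X))}
    (hta : ∀ g ∈ G, IsTreeAut X g) (htr : LevelTransitive X G)
    (hrist : ∀ (L : ℕ) (δ : Boundary X), ∃ x, x ∈ RR G L δ ∧ x ≠ 1)
    (δ₀ : Boundary X) (l₀ : ℕ) :
    ∃ L, l₀ ≤ L ∧ ∃ a₁ a₂ b₁ b₂ : Equiv.Perm (Boundary X),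
      a₁ ∈ RR G L δ₀ ∧ a₂ ∈ RR G L δ₀ ∧ b₁ ∈ RR G L δ₀ ∧ b₂ ∈ RR G L δ₀ ∧
      (c2 (c2 a₁ a₂)⁻¹ (c2 b₁ b₂)) δ₀ ≠ δ₀ := by
  by_contra hcon
  push_neg at hcon
  -- Transport of the fixing property along the orbit of `δ₀`.
  have hfix : ∀ g ∈ G, ∀ L, l₀ ≤ L → ∀ a₁ a₂ b₁ b₂ : Equiv.Perm (Boundary X),
      a₁ ∈ RR G L (g δ₀) → a₂ ∈ RR G L (g δ₀) → b₁ ∈ RR G L (g δ₀) → b₂ ∈ RR G L (g δ₀) →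
      (c2 (c2 a₁ a₂)⁻¹ (c2 b₁ b₂)) (g δ₀) = g δ₀ := by
    intro g hgG L hL a₁ a₂ b₁ b₂ h1 h2 h3 h4
    have pull : ∀ x, x ∈ RR G L (g δ₀) → g⁻¹ * x * g ∈ RR G L δ₀ := by
      intro x hx
      refine mem_RR.mpr ⟨G.mul_mem (G.mul_mem (G.inv_mem hgG) (mem_RR.mp hx).1) hgG, ?_⟩
      intro ζ hζ
      have hfix2 : x (g ζ) = g ζ := by
        apply (mem_RR.mp hx).2
        intro hag
        exact hζ ((hta g hgG L ζ δ₀).mpr hag)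
      show (g⁻¹ * x * g) ζ = ζ
      simp [Equiv.Perm.mul_apply, hfix2]
    have h0 := hcon L hL _ _ _ _ (pull _ h1) (pull _ h2) (pull _ h3) (pull _ h4)
    have hrw : c2 (c2 (g⁻¹ * a₁ * g) (g⁻¹ * a₂ * g))⁻¹ (c2 (g⁻¹ * b₁ * g) (g⁻¹ * b₂ * g))
        = g⁻¹ * (c2 (c2 a₁ a₂)⁻¹ (c2 b₁ b₂)) * g := by unfold c2; group
    rw [hrw] at h0
    have h0' : g⁻¹ ((c2 (c2 a₁ a₂)⁻¹ (c2 b₁ b₂)) (g δ₀)) = δ₀ := by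
      simpa [Equiv.Perm.mul_apply] using h0
    calc (c2 (c2 a₁ a₂)⁻¹ (c2 b₁ b₂)) (g δ₀)
        = g (g⁻¹ ((c2 (c2 a₁ a₂)⁻¹ (c2 b₁ b₂)) (g δ₀))) := by
          rw [Equiv.Perm.apply_inv_self]
      _ = g δ₀ := by rw [h0']
  -- Global triviality of all such double commutators at deep levels.
  have htriv : ∀ L, l₀ ≤ L → ∀ (β : Boundary X) (a₁ a₂ b₁ b₂ : Equiv.Perm (Boundary X)),
      a₁ ∈ RR G L β → a₂ ∈ RR G L β → b₁ ∈ RR G L β → b₂ ∈ RR G L β →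
      c2 (c2 a₁ a₂)⁻¹ (c2 b₁ b₂) = 1 := by
    intro L hL β a₁ a₂ b₁ b₂ h1 h2 h3 h4
    have hyR : c2 (c2 a₁ a₂)⁻¹ (c2 b₁ b₂) ∈ RR G L β :=
      c2_mem ((RR G L β).inv_mem (c2_mem h1 h2)) (c2_mem h3 h4)
    have hyG : c2 (c2 a₁ a₂)⁻¹ (c2 b₁ b₂) ∈ G := (mem_RR.mp hyR).1
    have key : ∀ (ζ : Boundary X) (n : ℕ), Ag n ((c2 (c2 a₁ a₂)⁻¹ (c2 b₁ b₂)) ζ) ζ := by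
      intro ζ n
      rcases em (Ag L ζ β) with hag | hag
      · obtain ⟨g, hgG, hgδ⟩ := trans_point htr (max n L) δ₀ ζ
        have hgLβ : Ag L (g δ₀) β := ag_trans (ag_mono (le_max_right n L) hgδ) hag
        have hRReq : RR G L β = RR G L (g δ₀) := RR_congr (ag_symm hgLβ)
        have hfixed : (c2 (c2 a₁ a₂)⁻¹ (c2 b₁ b₂)) (g δ₀) = g δ₀ :=
          hfix g hgG L hL a₁ a₂ b₁ b₂ (hRReq ▸ h1) (hRReq ▸ h2) (hRReq ▸ h3) (hRReq ▸ h4)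
        have h5 : Ag (max n L) ((c2 (c2 a₁ a₂)⁻¹ (c2 b₁ b₂)) (g δ₀))
            ((c2 (c2 a₁ a₂)⁻¹ (c2 b₁ b₂)) ζ) :=
          (hta _ hyG (max n L) (g δ₀) ζ).mp hgδ
        rw [hfixed] at h5
        exact ag_mono (le_max_left n L) (ag_trans (ag_symm h5) hgδ)
      · have hz : (c2 (c2 a₁ a₂)⁻¹ (c2 b₁ b₂)) ζ = ζ := (mem_RR.mp hyR).2 ζ hag
        rw [hz]
        exact ag_refl _ _
    apply Equiv.ext
    intro ζ
    show (c2 (c2 a₁ a₂)⁻¹ (c2 b₁ b₂)) ζ = ζ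
    funext m
    exact key ζ (m + 1) ⟨m, Nat.lt_succ_self m⟩
  -- All commutators of deep rigid stabilizers commute pairwise.
  have hcomm : ∀ L, l₀ ≤ L → ∀ (β : Boundary X) (a₁ a₂ b₁ b₂ : Equiv.Perm (Boundary X)),
      a₁ ∈ RR G L β → a₂ ∈ RR G L β → b₁ ∈ RR G L β → b₂ ∈ RR G L β →
      (c2 a₁ a₂) * (c2 b₁ b₂) = (c2 b₁ b₂) * (c2 a₁ a₂) := by
    intro L hL β a₁ a₂ b₁ b₂ h1 h2 h3 h4
    have h := htriv L hL β a₁ a₂ b₁ b₂ h1 h2 h3 h4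
    exact comm_of_inv_comm (c2_eq_one_iff.mp h)
  -- Derive the contradiction.
  obtain ⟨k₀, hk₀R, hk₀1⟩ := hrist l₀ δ₀
  by_cases hab : ∀ a b, a ∈ RR G l₀ δ₀ → b ∈ RR G l₀ δ₀ → a * b = b * a
  · -- the rigid stabilizer at level l₀ is abelian: kill a deeper one
    obtain ⟨ε, hε⟩ := exists_moved hk₀1
    have hεδ₀ : Ag l₀ ε δ₀ := moved_ag hk₀R hε
    obtain ⟨j, hj⟩ := exists_diff hε
    have hmov : MOff k₀ (max l₀ (j + 1)) ε :=
      moff_of_diff (hta k₀ (mem_RR.mp hk₀R).1) hj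
        (lt_of_lt_of_le (Nat.lt_succ_self j) (le_max_right _ _))
    obtain ⟨x, hxR, hx1⟩ := hrist (max l₀ (j + 1)) ε
    have hxl₀ : x ∈ RR G l₀ δ₀ := RR_mono hxR (le_max_left _ _) hεδ₀
    exact hx1 (kill hmov hxR (hab k₀ x hk₀R hxl₀))
  · push_neg at hab
    obtain ⟨astar, bstar, hastar, hbstar, hnecomm⟩ := hab
    have hk1 : c2 astar bstar ≠ 1 := fun h => hnecomm (c2_eq_one_iff.mp h)
    have hkR : c2 astar bstar ∈ RR G l₀ δ₀ := c2_mem hastar hbstar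
    obtain ⟨ε, hε⟩ := exists_moved hk1
    have hεδ₀ : Ag l₀ ε δ₀ := moved_ag hkR hε
    obtain ⟨j, hj⟩ := exists_diff hε
    set L : ℕ := max l₀ (j + 1) with hLdef
    have hLl₀ : l₀ ≤ L := le_max_left _ _
    have hmov : MOff (c2 astar bstar) L ε :=
      moff_of_diff (hta _ (mem_RR.mp hkR).1) hj
        (lt_of_lt_of_le (Nat.lt_succ_self j) (le_max_right _ _))
    -- commutators of the rigid stabilizer at (L, ε) are central in it
    have hcent : ∀ a₁ a₂ b : Equiv.Perm (Boundary X), a₁ ∈ RR G L ε → a₂ ∈ RR G L ε →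
        b ∈ RR G L ε → (c2 a₁ a₂) * b = b * (c2 a₁ a₂) := by
      intro a₁ a₂ b h1 h2 hbR
      have h1' : a₁ ∈ RR G l₀ δ₀ := RR_mono h1 hLl₀ hεδ₀
      have h2' : a₂ ∈ RR G l₀ δ₀ := RR_mono h2 hLl₀ hεδ₀
      have hkabar : (c2 astar bstar) * (c2 a₁ a₂) = (c2 a₁ a₂) * (c2 astar bstar) :=
        hcomm l₀ le_rfl δ₀ astar bstar a₁ a₂ hastar hbstar h1' h2'
      have hx1 : c2 (c2 astar bstar) (c2 a₁ a₂) = 1 := c2_eq_one_iff.mpr hkabar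
      have hid := grig_identity (k := c2 astar bstar) (a := c2 a₁ a₂) (b := b) hmov
          (fun ζ hz => moved_ag (c2_mem h1 h2) hz) (fun ζ hz => moved_ag hbR hz)
      rw [hx1] at hid
      have h1b : c2 (1 : Equiv.Perm (Boundary X)) b = 1 := by unfold c2; group
      rw [h1b] at hid
      exact comm_of_inv_comm (c2_eq_one_iff.mp hid.symm)
    by_cases hB2 : ∀ a₁ a₂, a₁ ∈ RR G L ε → a₂ ∈ RR G L ε → a₁ * a₂ = a₂ * a₁
    · obtain ⟨k', hk'R, hk'1⟩ := hrist L ε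
      obtain ⟨ε', hε'⟩ := exists_moved hk'1
      have hε'ε : Ag L ε' ε := moved_ag hk'R hε'
      obtain ⟨j', hj'⟩ := exists_diff hε'
      have hmov' : MOff k' (max L (j' + 1)) ε' :=
        moff_of_diff (hta k' (mem_RR.mp hk'R).1) hj'
          (lt_of_lt_of_le (Nat.lt_succ_self j') (le_max_right _ _))
      obtain ⟨x, hxR, hx1⟩ := hrist (max L (j' + 1)) ε'
      have hxL : x ∈ RR G L ε := RR_mono hxR (le_max_left _ _) hε'ε
      exact hx1 (kill hmov' hxR (hB2 k' x hk'R hxL))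
    · push_neg at hB2
      obtain ⟨a₁, a₂, h1, h2, hne2⟩ := hB2
      have habar1 : c2 a₁ a₂ ≠ 1 := fun h => hne2 (c2_eq_one_iff.mp h)
      have habarR : c2 a₁ a₂ ∈ RR G L ε := c2_mem h1 h2
      obtain ⟨ε'', hε''⟩ := exists_moved habar1
      have hε''ε : Ag L ε'' ε := moved_ag habarR hε''
      obtain ⟨j'', hj''⟩ := exists_diff hε''
      have hmov'' : MOff (c2 a₁ a₂) (max L (j'' + 1)) ε'' :=
        moff_of_diff (hta _ (mem_RR.mp habarR).1) hj''
          (lt_of_lt_of_le (Nat.lt_succ_self j'') (le_max_right _ _))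
      obtain ⟨x, hxR, hx1⟩ := hrist (max L (j'' + 1)) ε''
      have hxL : x ∈ RR G L ε := RR_mono hxR (le_max_left _ _) hε''ε
      exact hx1 (kill hmov'' hxR (hcent a₁ a₂ x h1 h2 hxL))

end St14

end Statement14Aux4
section Statement14Aux5
set_option linter.unusedSectionVars false
set_option maxHeartbeats 1000000

variable {X}

namespace St14

/-- Openness of orbit classes of the normal finite-index subgroup `Core`: each point has a
cone neighbourhood contained in its `Core`-orbit-closure class. -/
lemma class_open {G : Subgroup (Equiv.Perm (Boundary X))}
    (hta : ∀ g ∈ G, IsTreeAut X g) (htr : LevelTransitive X G)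
    (Core : Subgroup (Equiv.Perm (Boundary X)))
    (hCG : ∀ p ∈ Core, p ∈ G)
    (hconj : ∀ g ∈ G, ∀ p ∈ Core, g * p * g⁻¹ ∈ Core)
    {ι : Type} (hι : Finite ι) (rep : ι → Equiv.Perm (Boundary X))
    (hcover : ∀ g ∈ G, ∃ i, (rep i)⁻¹ * g ∈ Core)
    (γ : Boundary X) :
    ∃ n, ∀ δ, Ag n δ γ → ∀ d, ∃ c ∈ Core, Ag d (c γ) δ := by
  classical
  set P : Boundary X → Boundary X → Prop := fun α β => ∀ d, ∃ c ∈ Core, Ag d (c α) β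
    with hPdef
  have hCoreTA : ∀ c ∈ Core, IsTreeAut X c := fun c hc => hta c (hCG c hc)
  have Psymm : ∀ α β, P α β → P β α := by
    intro α β h d
    obtain ⟨c, hc, hAg⟩ := h d
    refine ⟨c⁻¹, Core.inv_mem hc, ?_⟩
    have h2 : Ag d (c⁻¹ (c α)) (c⁻¹ β) :=
      (hCoreTA c⁻¹ (Core.inv_mem hc) d (c α) β).mp hAg
    rw [Equiv.Perm.inv_apply_self] at h2
    exact ag_symm h2
  have Ptrans : ∀ α β χ, P α β → P β χ → P α χ := by
    intro α β χ h1 h2 d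
    obtain ⟨c1, hc1, hA1⟩ := h1 d
    obtain ⟨c2, hc2, hA2⟩ := h2 d
    refine ⟨c2 * c1, Core.mul_mem hc2 hc1, ?_⟩
    have h3 : Ag d (c2 (c1 α)) (c2 β) := (hCoreTA c2 hc2 d (c1 α) β).mp hA1
    show Ag d ((c2 * c1) α) χ
    rw [Equiv.Perm.mul_apply]
    exact ag_trans h3 hA2
  have Pconj : ∀ g ∈ G, ∀ α β, P α β → P (g α) (g β) := by
    intro g hg α β h d
    obtain ⟨c, hc, hA⟩ := h d
    refine ⟨g * c * g⁻¹, hconj g hg c hc, ?_⟩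
    have h3 : Ag d (g (c α)) (g β) := (hta g hg d (c α) β).mp hA
    have he : (g * c * g⁻¹) (g α) = g (c α) := by
      simp [Equiv.Perm.mul_apply]
    rw [he]
    exact h3
  by_contra hcon
  push_neg at hcon
  choose δf h1 df h2 using hcon
  have hd_gt : ∀ n, n < df n := by
    intro n
    by_contra hle
    push_neg at hle
    apply h2 n 1 Core.one_mem
    have : Ag (df n) γ (δf n) := ag_mono hle (ag_symm (h1 n))
    exact this
  have hgf : ∀ n, ∃ g ∈ G, Ag (df n) (g γ) (δf n) :=
    fun n => trans_point htr (df n) γ (δf n)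
  choose gf hgfG hgfA using hgf
  choose φ hφ using fun n => hcover (gf n) (hgfG n)
  haveI := hι
  obtain ⟨i₀, hfib⟩ := Finite.exists_infinite_fiber φ
  have hinf : (φ ⁻¹' {i₀}).Infinite := Set.infinite_coe_iff.mp hfib
  have hmemCore : ∀ n, φ n = i₀ → (rep i₀)⁻¹ * gf n ∈ Core := by
    intro n hn
    have := hφ n
    rwa [hn] at this
  -- rep i₀ ∈ G
  obtain ⟨n₁, hn₁fib, hn₁pos⟩ := hinf.exists_gt 0
  have hn₁eq : φ n₁ = i₀ := hn₁fib
  have hf₀G : rep i₀ ∈ G := by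
    have hcn : (rep i₀)⁻¹ * gf n₁ ∈ Core := hmemCore n₁ hn₁eq
    have : rep i₀ = gf n₁ * ((rep i₀)⁻¹ * gf n₁)⁻¹ := by group
    rw [this]
    exact G.mul_mem (hgfG n₁) (G.inv_mem (hCG _ hcn))
  -- `γ` is in the class of `(rep i₀)⁻¹ γ`
  have claim1 : P γ ((rep i₀)⁻¹ γ) := by
    intro d
    obtain ⟨n, hnfib, hnd⟩ := hinf.exists_gt d
    have hneq : φ n = i₀ := hnfib
    have hcn : (rep i₀)⁻¹ * gf n ∈ Core := hmemCore n hneq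
    refine ⟨(rep i₀)⁻¹ * gf n, hcn, ?_⟩
    have hA1 : Ag (df n) ((rep i₀)⁻¹ (gf n γ)) ((rep i₀)⁻¹ (δf n)) :=
      (hta _ (G.inv_mem hf₀G) (df n) _ _).mp (hgfA n)
    have hA2 : Ag n ((rep i₀)⁻¹ (δf n)) ((rep i₀)⁻¹ γ) :=
      (hta _ (G.inv_mem hf₀G) n _ _).mp (h1 n)
    have hdn : d ≤ df n := le_of_lt (lt_trans hnd (hd_gt n))
    have hd2 : d ≤ n := le_of_lt hnd
    have hA3 := ag_trans (ag_mono hdn hA1) (ag_mono hd2 hA2)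
    show Ag d (((rep i₀)⁻¹ * gf n) γ) ((rep i₀)⁻¹ γ)
    rw [Equiv.Perm.mul_apply]
    exact hA3
  have claim2 : P γ (rep i₀ γ) := by
    have h3 : P ((rep i₀)⁻¹ γ) γ := Psymm _ _ claim1
    have h4 : P (rep i₀ ((rep i₀)⁻¹ γ)) (rep i₀ γ) := Pconj _ hf₀G _ _ h3
    rwa [Equiv.Perm.apply_inv_self] at h4
  -- final contradiction at `n₁`
  have hcn₁ : (rep i₀)⁻¹ * gf n₁ ∈ Core := hmemCore n₁ hn₁eq
  have h5 : P γ (((rep i₀)⁻¹ * gf n₁) γ) := fun d => ⟨_, hcn₁, ag_refl _ _⟩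
  have h6 : P (rep i₀ γ) (rep i₀ (((rep i₀)⁻¹ * gf n₁) γ)) := Pconj _ hf₀G _ _ h5
  have h7 : P γ (rep i₀ (((rep i₀)⁻¹ * gf n₁) γ)) := Ptrans _ _ _ claim2 h6
  have h8 : rep i₀ (((rep i₀)⁻¹ * gf n₁) γ) = gf n₁ γ := by
    rw [Equiv.Perm.mul_apply, Equiv.Perm.apply_inv_self]
  rw [h8] at h7
  obtain ⟨c, hc, hAg⟩ := h7 (df n₁)
  exact h2 n₁ c hc (ag_trans hAg (hgfA n₁))

end St14

end Statement14Aux5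
section Statement14Aux6
set_option linter.unusedSectionVars false
set_option maxHeartbeats 1000000

variable {X}

namespace St14

lemma isOpen_ag (n : ℕ) (γ : Boundary X) : IsOpen {δ : Boundary X | Ag n δ γ} := by
  letI : ∀ i, TopologicalSpace (X i) := fun _ => ⊥
  haveI : ∀ i, DiscreteTopology (X i) := fun _ => ⟨rfl⟩
  have heq : {δ : Boundary X | Ag n δ γ}
      = ⋂ i : Fin n, (fun δ : Boundary X => δ (i : ℕ)) ⁻¹' {γ (i : ℕ)} := by
    ext δ
    simp only [Set.mem_setOf_eq, Set.mem_iInter, Set.mem_preimage, Set.mem_singleton_iff]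
    exact Iff.rfl
  rw [heq]
  exact isOpen_iInter_of_finite fun i =>
    (continuous_apply (i : ℕ)).isOpen_preimage _ (isOpen_discrete _)

/-- The central membership result: any point in the closure of the support of `H`
belongs to the support. -/
lemma main_mem {G H : Subgroup (Equiv.Perm (Boundary X))}
    (hG : IsBranch X G) (hHG : H ≤ G) (hnorm : (Subgroup.normalizer (H : Set (Equiv.Perm (Boundary X)))).relIndex G ≠ 0)
    (γ : Boundary X) (hcl : ∀ n, ∃ δ, δ ∈ SuppSet X H ∧ Ag n δ γ) :
    γ ∈ SuppSet X H := by
  obtain ⟨hta, htr, hrel⟩ := hG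
  by_cases hfix : ∃ h ∈ H, h γ ≠ γ
  · exact hfix
  push_neg at hfix
  by_cases hdeg : ∃ n₀, ∀ i, n₀ ≤ i → Subsingleton (X i)
  · obtain ⟨n₀, hn₀⟩ := hdeg
    obtain ⟨δ, hδS, hδγ⟩ := hcl n₀
    have hδeq : δ = γ := by
      funext m
      rcases lt_or_ge m n₀ with h | h
      · exact hδγ ⟨m, h⟩
      · exact @Subsingleton.elim _ (hn₀ m h) _ _
    rwa [hδeq] at hδS
  push_neg at hdeg
  have hndeg : ∀ n, ∃ i, n ≤ i ∧ ∃ x y : X i, x ≠ y := by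
    intro n
    obtain ⟨i, hi, hns⟩ := hdeg n
    have hnt : Nontrivial (X i) := hns
    obtain ⟨x, y, hxy⟩ := hnt
    exact ⟨i, hi, x, y, hxy⟩
  have hInf : Infinite ↥G := G_infinite htr hndeg
  obtain ⟨Core, ι, hι, rep, hCG, hCN, hconj, ⟨k, hkC, hk1⟩, hcover⟩ := exists_core hnorm hInf
  obtain ⟨n₀, hgrig⟩ := grig hta htr Core hCG hconj hkC hk1
  have hrist := rist_nontrivial ⟨hta, htr, hrel⟩ hInf
  obtain ⟨nc, hclass⟩ := class_open hta htr Core hCG hconj hι rep hcover γ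
  obtain ⟨δ, hδS, hδγ⟩ := hcl (max nc n₀)
  obtain ⟨h, hhH, hhδ⟩ := hδS
  have hhG : h ∈ G := hHG hhH
  have hhγ : h γ = γ := hfix h hhH
  have hAghδ : Ag (max nc n₀) (h δ) δ := by
    have h3 := (hta h hhG (max nc n₀) δ γ).mp hδγ
    rw [hhγ] at h3
    exact ag_trans h3 (ag_symm hδγ)
  obtain ⟨p, hp⟩ := exists_diff hhδ
  have hpn₁ : max nc n₀ ≤ p := by
    by_contra hlt
    push_neg at hlt
    exact hp (hAghδ ⟨p, hlt⟩)
  have hmov : MOff h (p + 1) δ := moff_of_diff (hta h hhG) hp (Nat.lt_succ_self p)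
  obtain ⟨c, hcC, hcA⟩ := hclass δ (ag_mono (le_max_left nc n₀) hδγ) (p + 1)
  obtain ⟨L, hLp, a₁, a₂, b₁, b₂, h1, h2, h3, h4, hmove⟩ :=
    core_lemma hta htr hrist (c γ) (p + 1)
  have hn₀L : n₀ ≤ L :=
    le_trans (le_trans (le_max_right nc n₀) hpn₁) (le_trans (Nat.le_succ p) hLp)
  have habarC : c2 a₁ a₂ ∈ Core := hgrig L hn₀L (c γ) a₁ a₂ h1 h2
  have hbbarC : c2 b₁ b₂ ∈ Core := hgrig L hn₀L (c γ) b₁ b₂ h3 h4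
  have habarP : c2 a₁ a₂ ∈ RR G (p + 1) δ := RR_mono (c2_mem h1 h2) hLp hcA
  have hbbarP : c2 b₁ b₂ ∈ RR G (p + 1) δ := RR_mono (c2_mem h3 h4) hLp hcA
  have habarN : c2 a₁ a₂ ∈ (Subgroup.normalizer (H : Set (Equiv.Perm (Boundary X)))) := hCN _ habarC
  have hbbarN : c2 b₁ b₂ ∈ (Subgroup.normalizer (H : Set (Equiv.Perm (Boundary X)))) := hCN _ hbbarC
  have hid := grig_identity (k := h) (a := c2 a₁ a₂) (b := c2 b₁ b₂) hmov
      (fun ζ hz => moved_ag habarP hz) (fun ζ hz => moved_ag hbbarP hz)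
  have hxH : c2 h (c2 a₁ a₂) ∈ H := by
    have h1' : (c2 a₁ a₂) * h⁻¹ * (c2 a₁ a₂)⁻¹ ∈ H :=
      (Subgroup.mem_normalizer_iff.mp habarN h⁻¹).mp (H.inv_mem hhH)
    have h2' : c2 h (c2 a₁ a₂) = h * ((c2 a₁ a₂) * h⁻¹ * (c2 a₁ a₂)⁻¹) := by
      unfold c2; group
    rw [h2']
    exact H.mul_mem hhH h1'
  have hyH : c2 (c2 h (c2 a₁ a₂)) (c2 b₁ b₂) ∈ H := by
    have h1' : (c2 b₁ b₂) * (c2 h (c2 a₁ a₂))⁻¹ * (c2 b₁ b₂)⁻¹ ∈ H :=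
      (Subgroup.mem_normalizer_iff.mp hbbarN _).mp (H.inv_mem hxH)
    have h2' : c2 (c2 h (c2 a₁ a₂)) (c2 b₁ b₂)
        = (c2 h (c2 a₁ a₂)) * ((c2 b₁ b₂) * (c2 h (c2 a₁ a₂))⁻¹ * (c2 b₁ b₂)⁻¹) := by
      unfold c2; group
    rw [h2']
    exact H.mul_mem hxH h1'
  rw [hid] at hyH
  have hcN : c ∈ (Subgroup.normalizer (H : Set (Equiv.Perm (Boundary X)))) := hCN c hcC
  have hfinal : c⁻¹ * (c2 (c2 a₁ a₂)⁻¹ (c2 b₁ b₂)) * c ∈ H := by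
    have h5 := (Subgroup.mem_normalizer_iff.mp ((Subgroup.normalizer (H : Set (Equiv.Perm (Boundary X)))).inv_mem hcN) _).mp hyH
    rwa [inv_inv] at h5
  refine ⟨c⁻¹ * (c2 (c2 a₁ a₂)⁻¹ (c2 b₁ b₂)) * c, hfinal, ?_⟩
  intro hcon
  apply hmove
  have h6 : c⁻¹ ((c2 (c2 a₁ a₂)⁻¹ (c2 b₁ b₂)) (c γ)) = γ := by
    simpa [Equiv.Perm.mul_apply] using hcon
  calc (c2 (c2 a₁ a₂)⁻¹ (c2 b₁ b₂)) (c γ)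
      = c (c⁻¹ ((c2 (c2 a₁ a₂)⁻¹ (c2 b₁ b₂)) (c γ))) := by
        rw [Equiv.Perm.apply_inv_self]
    _ = c γ := by rw [h6]

end St14

end Statement14Aux6
/-- Let `G ≤ Aut T` be a branch group and `H ≤ G` a subgroup with
finitely many conjugates in `G` (its normalizer has finite index in `G`). Then the support
`Supp(H) ⊆ ∂T` is clopen. -/
theorem supp_isClopen_of_finite_conjugates (X : ℕ → Type) [∀ n, Fintype (X n)]
    [∀ n, Nonempty (X n)] (G H : Subgroup (Equiv.Perm (Boundary X)))
    (hG : IsBranch X G) (hHG : H ≤ G) (hnorm : (Subgroup.normalizer (H : Set (Equiv.Perm (Boundary X)))).relIndex G ≠ 0) :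
    IsClopen (SuppSet X H) := by
  constructor
  · rw [← isOpen_compl_iff]
    rw [isOpen_iff_forall_mem_open]
    intro γ hγ
    have hex : ∃ n, ∀ δ, St14.Ag n δ γ → δ ∉ SuppSet X H := by
      by_contra hc
      push_neg at hc
      refine hγ (St14.main_mem hG hHG hnorm γ (fun n => ?_))
      obtain ⟨δ, h1, h2⟩ := hc n
      exact ⟨δ, h2, h1⟩
    obtain ⟨n, hn⟩ := hex
    exact ⟨{δ | St14.Ag n δ γ}, fun δ hδ => hn δ hδ, St14.isOpen_ag n γ, St14.ag_refl n γ⟩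
  · rw [isOpen_iff_forall_mem_open]
    rintro γ ⟨h, hhH, hhγ⟩
    obtain ⟨j, hj⟩ := St14.exists_diff hhγ
    refine ⟨{δ | St14.Ag (j + 1) δ γ}, ?_, St14.isOpen_ag _ γ, St14.ag_refl _ γ⟩
    intro δ hδ
    refine ⟨h, hhH, ?_⟩
    intro hcon
    apply hj
    have h1 : St14.Ag (j + 1) (h δ) (h γ) := ((hG.1 h (hHG hhH)) (j + 1) δ γ).mp hδ
    have e1 : h δ j = h γ j := h1 ⟨j, Nat.lt_succ_self j⟩
    rw [hcon] at e1
    have e2 : δ j = γ j := hδ ⟨j, Nat.lt_succ_self j⟩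
    exact e1.symm.trans e2
end

section
/- Let G ≤ Aut T be a weakly branch group and H a k-subnormal subgroup of G. Then for any vertex v ∈ T moved by H, the subgroup H contains the k-th derived subgroup rist_G(v)^{(k)} of the rigid vertex stabilizer of v. -/
open TopologicalSpace

/-! Model of a spherically homogeneous rooted tree `T`: the tree is determined by the
sequence of branching index sets `X 0, X 1, X 2, …` (all vertices at level `n` have the
same set `X n` of children, each `X n` finite and nonempty).  Vertices are finite words,
the boundary `∂T` is the set of infinite words, with the topology generated by cone sets. -/

variable (X : ℕ → Type) [∀ n, Fintype (X n)] [∀ n, Nonempty (X n)]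

section AuxLemmas

lemma derivedSub_le_self {P : Type*} [Group P] (H : Subgroup P) : ∀ n, derivedSub H n ≤ H
  | 0 => le_rfl
  | n + 1 => by
    show ⁅derivedSub H n, derivedSub H n⁆ ≤ H
    rw [Subgroup.commutator_le]
    intro g hg h hh
    have hg' := derivedSub_le_self H n hg
    have hh' := derivedSub_le_self H n hh
    rw [commutatorElement_def]
    exact H.mul_mem (H.mul_mem (H.mul_mem hg' hh') (H.inv_mem hg')) (H.inv_mem hh')

lemma IsKSubnormalIn.le {P : Type*} [Group P] {G H : Subgroup P} {k : ℕ}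
    (h : IsKSubnormalIn G H k) : H ≤ G := by
  obtain ⟨c, hc0, hck, hstep⟩ := h
  have key : ∀ i ≤ k, c 0 ≤ c i := by
    intro i hi
    induction i with
    | zero => exact le_rfl
    | succ n ih => exact (ih (by omega)).trans (hstep n (by omega)).1
  rw [← hc0, ← hck]
  exact key k le_rfl

lemma mem_rist_iff {X : ℕ → Type} [∀ n, Fintype (X n)] [∀ n, Nonempty (X n)]
    {G : Subgroup (Equiv.Perm (Boundary X))} {v : Vertex X} {g : Equiv.Perm (Boundary X)} :
    g ∈ rist X G v ↔ g ∈ G ∧ ∀ γ, γ ∉ Cone X v → g γ = γ := Iff.rfl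

lemma cone_nonempty (X : ℕ → Type) [∀ n, Fintype (X n)] [∀ n, Nonempty (X n)]
    (v : Vertex X) : (Cone X v).Nonempty := by
  classical
  refine ⟨fun n => if h : n < v.1 then v.2 ⟨n, h⟩ else Classical.arbitrary _, fun i => ?_⟩
  simp only [i.isLt, dif_pos, Fin.eta]

/-- Disjointly supported permutations commute (pointwise form). -/
lemma commute_of_disjoint_supp {α : Type*} {A B : Set α} (hAB : A ∩ B = ∅)
    {f g : Equiv.Perm α} (hf : ∀ γ, γ ∉ A → f γ = γ) (hg : ∀ γ, γ ∉ B → g γ = γ) :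
    ∀ γ, f (g γ) = g (f γ) := by
  have hmemf : ∀ γ ∈ A, f γ ∈ A := by
    intro γ hγ
    by_contra hfγ
    have := hf _ hfγ
    have h2 : f γ = γ := f.injective this
    rw [h2] at hfγ
    exact hfγ hγ
  have hmemg : ∀ γ ∈ B, g γ ∈ B := by
    intro γ hγ
    by_contra hgγ
    have := hg _ hgγ
    have h2 : g γ = γ := g.injective this
    rw [h2] at hgγ
    exact hgγ hγ
  intro γ
  by_cases hA : γ ∈ A
  · have hB : γ ∉ B := fun hB => Set.eq_empty_iff_forall_notMem.mp hAB γ ⟨hA, hB⟩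
    have hfB : f γ ∉ B := fun hB =>
      Set.eq_empty_iff_forall_notMem.mp hAB (f γ) ⟨hmemf γ hA, hB⟩
    rw [hg γ hB, hg (f γ) hfB]
  · by_cases hB : γ ∈ B
    · have hgA : g γ ∉ A := fun hA' =>
        Set.eq_empty_iff_forall_notMem.mp hAB (g γ) ⟨hA', hmemg γ hB⟩
      rw [hf γ hA, hf (g γ) hgA]
    · rw [hf γ hA, hg γ hB, hf γ hA]

/-- A tree automorphism maps a cone to a cone of the same level. -/
lemma image_cone (X : ℕ → Type) [∀ n, Fintype (X n)] [∀ n, Nonempty (X n)]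
    {g : Equiv.Perm (Boundary X)} (hg : IsTreeAut X g) (v : Vertex X) :
    ∃ u : Word X v.1, (fun γ => g γ) '' Cone X v = Cone X ⟨v.1, u⟩ := by
  obtain ⟨γ₀, hγ₀⟩ := cone_nonempty X v
  refine ⟨fun i => g γ₀ i, ?_⟩
  ext δ
  constructor
  · rintro ⟨ε, hε, rfl⟩
    intro i
    exact (hg v.1 ε γ₀).1 (fun j => (hε j).trans (hγ₀ j).symm) i
  · intro hδ
    refine ⟨g⁻¹ δ, fun i => ?_, by simp⟩
    have h1 : ∀ i : Fin v.1, g (g⁻¹ δ) i = g γ₀ i := by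
      intro i
      rw [Equiv.Perm.inv_def, Equiv.apply_symm_apply]
      exact hδ i
    have h2 := (hg v.1 (g⁻¹ δ) γ₀).2 h1
    exact (h2 i).trans (hγ₀ i)

lemma cone_disjoint (X : ℕ → Type) [∀ n, Fintype (X n)] [∀ n, Nonempty (X n)]
    (v : Vertex X) (u : Word X v.1) (h : Cone X ⟨v.1, u⟩ ≠ Cone X v) :
    Cone X ⟨v.1, u⟩ ∩ Cone X v = ∅ := by
  rw [Set.eq_empty_iff_forall_notMem]
  rintro γ ⟨h1, h2⟩
  apply h
  have : u = v.2 := funext fun i => (h1 i).symm.trans (h2 i)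
  obtain ⟨n, w⟩ := v
  simp only at this
  rw [this]

end AuxLemmas

/-- Let `G ≤ Aut T` be a weakly branch group and `H` a `k`-subnormal
subgroup of `G`. Then for any vertex `v ∈ T` moved by `H`, the subgroup `H` contains the
`k`-th derived subgroup `rist_G(v)^{(k)}` of the rigid vertex stabilizer of `v`. -/
theorem subnormal_contains_derived_rist (X : ℕ → Type) [∀ n, Fintype (X n)]
    [∀ n, Nonempty (X n)] (G H : Subgroup (Equiv.Perm (Boundary X)))
    (hG : IsWeaklyBranch X G) (k : ℕ) (hH : IsKSubnormalIn G H k)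
    (v : Vertex X) (hv : MovesVertex X H v) :
    derivedSub (rist X G v) k ≤ H := by
  induction k generalizing H with
  | zero =>
    obtain ⟨c, hc0, hck, _⟩ := hH
    have hHG : H = G := by rw [← hc0, hck]
    intro g hg
    rw [hHG]
    exact hg.1
  | succ k ih =>
    have hHG : H ≤ G := hH.le
    obtain ⟨c, hc0, hck, hstep⟩ := hH
    -- H ⊴ H₁ = c 1, and H₁ is k-subnormal in G
    set H₁ := c 1 with hH₁
    have hle : H ≤ H₁ := by rw [← hc0]; exact (hstep 0 (by omega)).1
    have hnorm : ∀ g ∈ H₁, ∀ h ∈ H, g * h * g⁻¹ ∈ H := by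
      rw [← hc0]; exact (hstep 0 (by omega)).2
    have hsub₁ : IsKSubnormalIn G H₁ k :=
      ⟨fun i => c (i + 1), rfl, hck, fun i hi => hstep (i + 1) (by omega)⟩
    obtain ⟨h, hhH, hne⟩ := hv
    have hmv₁ : MovesVertex X H₁ v := ⟨h, hle hhH, hne⟩
    have hRle : derivedSub (rist X G v) k ≤ H₁ := ih H₁ hsub₁ hmv₁
    -- the image of the cone at v under h is a disjoint cone
    have hhG : h ∈ G := hHG hhH
    have htree : IsTreeAut X h := hG.1 h hhG
    obtain ⟨u, hu⟩ := image_cone X htree v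
    have hdisj : Cone X ⟨v.1, u⟩ ∩ Cone X v = ∅ :=
      cone_disjoint X v u (by rw [← hu]; exact hne)
    -- prove the commutator bound
    show ⁅derivedSub (rist X G v) k, derivedSub (rist X G v) k⁆ ≤ H
    rw [Subgroup.commutator_le]
    intro a ha b hb
    have haR : a ∈ rist X G v := derivedSub_le_self _ k ha
    have hbR : b ∈ rist X G v := derivedSub_le_self _ k hb
    have haH₁ : a ∈ H₁ := hRle ha
    have hbH₁ : b ∈ H₁ := hRle hb
    -- c' = h a⁻¹ h⁻¹ is supported on the cone Cone ⟨v.1, u⟩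
    set c' : Equiv.Perm (Boundary X) := h * a⁻¹ * h⁻¹ with hc'
    have hsuppc : ∀ γ, γ ∉ Cone X ⟨v.1, u⟩ → c' γ = γ := by
      intro γ hγ
      have hinv : h⁻¹ γ ∉ Cone X v := by
        intro hmem
        apply hγ
        rw [← hu]
        exact ⟨h⁻¹ γ, hmem, by simp⟩
      have hainv : a⁻¹ ∈ rist X G v := (rist X G v).inv_mem haR
      show h (a⁻¹ (h⁻¹ γ)) = γ
      rw [hainv.2 _ hinv, Equiv.Perm.inv_def, Equiv.apply_symm_apply]
    -- b commutes with c'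
    have hcomm : c' * b = b * c' :=
      Equiv.ext fun γ => commute_of_disjoint_supp hdisj hsuppc hbR.2 γ
    -- x = [a, h] ∈ H, y = b x⁻¹ b⁻¹ ∈ H
    have hxH : a * h * a⁻¹ * h⁻¹ ∈ H := H.mul_mem (hnorm a haH₁ h hhH) (H.inv_mem hhH)
    have hyH : b * (a * h * a⁻¹ * h⁻¹)⁻¹ * b⁻¹ ∈ H :=
      hnorm b hbH₁ _ (H.inv_mem hxH)
    open scoped commutatorElement in
    have hprod : (a * h * a⁻¹ * h⁻¹) * (b * (a * h * a⁻¹ * h⁻¹)⁻¹ * b⁻¹) = ⁅a, b⁆ := by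
      have e1 : a * h * a⁻¹ * h⁻¹ = a * c' := by rw [hc']; group
      rw [e1, commutatorElement_def]
      have e2 : a * c' * (b * (a * c')⁻¹ * b⁻¹) = a * (c' * b) * c'⁻¹ * a⁻¹ * b⁻¹ := by
        group
      rw [e2, hcomm]
      group
    rw [← hprod]
    exact H.mul_mem hxH hyH
end

section
/- Let G ≤ Aut T be a branch group and H ∈ L(G) a subnormal subgroup with finitely many conjugates. Then in the structure lattice ℒ(G), the class [H] equals the class of the product of rigid vertex stabilizers over the support of H: [H] = [∏_{v ∈ Supp(H)} rist_G(v)], where the product is taken over a set of pairwise incomparable vertices v with C_v ⊆ Supp(H) covering Supp(H). -/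
open TopologicalSpace
open scoped commutatorElement

/-! Model of a spherically homogeneous rooted tree `T`: the tree is determined by the
sequence of branching index sets `X 0, X 1, X 2, …` (all vertices at level `n` have the
same set `X n` of children, each `X n` finite and nonempty).  Vertices are finite words,
the boundary `∂T` is the set of infinite words, with the topology generated by cone sets. -/

variable (X : ℕ → Type) [∀ n, Fintype (X n)] [∀ n, Nonempty (X n)]

section AuxGeneral

namespace StructThm

variable {α : Type*}

/-- The subgroup of permutations supported on `T`. -/
def suppOn (T : Set α) : Subgroup (Equiv.Perm α) where
  carrier := {g | ∀ a ∉ T, g a = a}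
  one_mem' := fun _ _ => rfl
  mul_mem' := by
    rintro a b ha hb γ hγ
    simp only [Set.mem_setOf_eq] at *
    rw [Equiv.Perm.mul_apply, hb γ hγ, ha γ hγ]
  inv_mem' := by
    rintro a ha γ hγ
    simp only [Set.mem_setOf_eq] at *
    conv_lhs => rw [← ha γ hγ]
    exact Equiv.symm_apply_apply a γ

theorem mem_suppOn {T : Set α} {g : Equiv.Perm α} : g ∈ suppOn T ↔ ∀ a ∉ T, g a = a := Iff.rfl

theorem suppOn_mono {T T' : Set α} (h : T ⊆ T') : suppOn T ≤ suppOn T' :=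
  fun g hg a ha => hg a fun hc => ha (h hc)

theorem apply_mem_of_mem_suppOn {T : Set α} {g : Equiv.Perm α} (hg : g ∈ suppOn T) {a : α}
    (ha : a ∈ T) : g a ∈ T := by
  by_contra hc
  have h1 : g (g a) = g a := hg _ hc
  have h2 : g a = a := g.injective h1
  rw [h2] at hc; exact hc ha

theorem commute_of_disjoint {T T' : Set α} {g h : Equiv.Perm α} (hg : g ∈ suppOn T)
    (hh : h ∈ suppOn T') (hd : ∀ a ∈ T, a ∉ T') : Commute g h := by
  have : (g * h : Equiv.Perm α) = h * g := by
    apply Equiv.ext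
    intro a
    rw [Equiv.Perm.mul_apply, Equiv.Perm.mul_apply]
    by_cases haT : a ∈ T
    · rw [hh a (hd a haT), hh _ (hd _ (apply_mem_of_mem_suppOn hg haT))]
    · by_cases haT' : a ∈ T'
      · rw [hg a haT, hg _ (fun hc => hd _ hc (apply_mem_of_mem_suppOn hh haT'))]
      · rw [hg a haT, hh a haT']; exact hg a haT
  exact this

theorem commutator_mem_of_moved {A B : Subgroup (Equiv.Perm α)}
    (hnorm : ∀ b ∈ B, ∀ a ∈ A, b * a * b⁻¹ ∈ A)
    {h : Equiv.Perm α} (hhA : h ∈ A) {U : Set α} (hU : ∀ a ∈ U, h a ∉ U)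
    {x y : Equiv.Perm α} (hx : x ∈ B) (hy : y ∈ B)
    (hxU : x ∈ suppOn U) (hyU : y ∈ suppOn U) : ⁅x, y⁆ ∈ A := by
  set d := h * x⁻¹ * h⁻¹ with hd
  have hdsupp : d ∈ suppOn ((fun a => h a) '' U) := by
    intro a ha
    have h1 : h⁻¹ a ∉ U := fun hc => ha ⟨h⁻¹ a, hc, h.apply_symm_apply a⟩
    have h2 : x⁻¹ (h⁻¹ a) = h⁻¹ a := (suppOn U).inv_mem hxU _ h1
    show h (x⁻¹ (h⁻¹ a)) = a
    rw [h2]; exact h.apply_symm_apply a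
  have hcom : Commute d y := by
    refine commute_of_disjoint hdsupp hyU ?_
    rintro a ⟨u, hu, rfl⟩
    exact hU u hu
  have hxdA : x * d ∈ A := by
    have h1 : x * h * x⁻¹ ∈ A := hnorm x hx h hhA
    have h2 : x * h * x⁻¹ * h⁻¹ ∈ A := A.mul_mem h1 (A.inv_mem hhA)
    have h3 : x * d = x * h * x⁻¹ * h⁻¹ := by rw [hd]; group
    rw [h3]; exact h2
  have key : ⁅x * d, y⁆ = ⁅x, y⁆ := by
    have h3 : d * y * d⁻¹ = y := by rw [hcom.eq]; group
    rw [commutatorElement_def, commutatorElement_def]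
    calc x * d * y * (x * d)⁻¹ * y⁻¹ = x * (d * y * d⁻¹) * x⁻¹ * y⁻¹ := by group
      _ = x * y * x⁻¹ * y⁻¹ := by rw [h3]
  have hfin : ⁅x * d, y⁆ ∈ A := by
    have h4 : y * (x * d)⁻¹ * y⁻¹ ∈ A := hnorm y hy _ (A.inv_mem hxdA)
    have h5 : ⁅x * d, y⁆ = (x * d) * (y * (x * d)⁻¹ * y⁻¹) := by
      rw [commutatorElement_def]; group
    rw [h5]; exact A.mul_mem hxdA h4
  rw [← key]; exact hfin

theorem noncommProd_mem_suppOn {ι : Type*} (s : Finset ι) (g : ι → Equiv.Perm α)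
    (T : ι → Set α) (comm) (hsupp : ∀ i ∈ s, g i ∈ suppOn (T i)) :
    s.noncommProd g comm ∈ suppOn (⋃ i ∈ s, T i) := by
  refine Submonoid.noncommProd_mem (suppOn (⋃ i ∈ s, T i)).toSubmonoid s g comm ?_
  intro i hi
  exact suppOn_mono (Set.subset_biUnion_of_mem hi) (hsupp i hi)

theorem noncommProd_apply_of_mem {ι : Type*} (s : Finset ι) (g : ι → Equiv.Perm α)
    (T : ι → Set α) (comm) (hsupp : ∀ i ∈ s, g i ∈ suppOn (T i))
    (hdisj : ∀ i ∈ s, ∀ j ∈ s, i ≠ j → ∀ a ∈ T i, a ∉ T j)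
    {i₀ : ι} (hi₀ : i₀ ∈ s) {a : α} (ha : a ∈ T i₀) :
    s.noncommProd g comm a = g i₀ a := by
  classical
  revert comm hsupp hdisj hi₀
  induction s using Finset.induction_on with
  | empty => intro comm hsupp hdisj hi₀; exact absurd hi₀ (Finset.notMem_empty i₀)
  | @insert j s' hj ih =>
    intro comm hsupp hdisj hi₀
    rw [Finset.noncommProd_insert_of_notMem s' j g comm hj]
    rcases Finset.mem_insert.mp hi₀ with rfl | hi₀s
    · have hfix : s'.noncommProd g (comm.mono (by exact_mod_cast Finset.subset_insert i₀ s')) a = a := by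
        have hmem := noncommProd_mem_suppOn s' g T
          (comm.mono (by exact_mod_cast Finset.subset_insert i₀ s'))
          (fun i hi => hsupp i (Finset.mem_insert_of_mem hi))
        refine hmem a ?_
        intro hc
        obtain ⟨Ti, ⟨i, rfl⟩, hmem2⟩ := hc
        simp only [Set.mem_iUnion] at hmem2
        obtain ⟨hi, hai⟩ := hmem2
        exact hdisj i₀ hi₀ i (Finset.mem_insert_of_mem hi)
          (fun hc' => hj (hc' ▸ hi)) a ha hai
      rw [Equiv.Perm.mul_apply, hfix]
    · have hne : i₀ ≠ j := fun hc => hj (hc ▸ hi₀s)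
      rw [Equiv.Perm.mul_apply,
        ih (comm.mono (by exact_mod_cast Finset.subset_insert j s'))
          (fun i hi => hsupp i (Finset.mem_insert_of_mem hi))
          (fun i hi j' hj' => hdisj i (Finset.mem_insert_of_mem hi) j' (Finset.mem_insert_of_mem hj'))
          hi₀s]
      exact hsupp j (Finset.mem_insert_self j s') _ (fun hc => hdisj i₀ hi₀ j (Finset.mem_insert_self j s') hne _ (apply_mem_of_mem_suppOn (hsupp i₀ hi₀) ha) hc)

theorem index_pi' {ι : Type*} [Fintype ι] {f : ι → Type*} [∀ i, Group (f i)]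
    (H : ∀ i, Subgroup (f i)) : (Subgroup.pi Set.univ H).index = ∏ i, (H i).index := by
  simp_rw [Subgroup.index, ← Nat.card_pi]
  refine Nat.card_congr
    ((Quotient.congrRight (fun x y ↦ ?_)).trans (Setoid.piQuotientEquiv _).symm)
  rw [QuotientGroup.leftRel_pi]

theorem subgroup_noncommPiCoprod_apply {Gr : Type*} [Group Gr] {ι : Type*} [Fintype ι]
    {H : ι → Subgroup Gr}
    (hcomm : Pairwise fun i j : ι => ∀ x y : Gr, x ∈ H i → y ∈ H j → Commute x y)
    (f : ∀ i, H i) :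
    Subgroup.noncommPiCoprod hcomm f =
      Finset.univ.noncommProd (fun i => (f i : Gr))
        (fun i _ j _ hne => hcomm hne _ _ (f i).2 (f j).2) :=
  MonoidHom.noncommPiCoprod_apply _ _

end StructThm

end AuxGeneral

section AuxTree

open StructThm

theorem cone_point (v : Vertex X) : ∃ γ : Boundary X, γ ∈ Cone X v := by
  refine ⟨fun i => if h : i < v.1 then v.2 ⟨i, h⟩ else Classical.arbitrary (X i), ?_⟩
  intro i
  show (if h : (i : ℕ) < v.1 then v.2 ⟨i, h⟩ else Classical.arbitrary (X i)) = v.2 i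
  rw [dif_pos i.isLt]

theorem cone_subset {v w : Vertex X} (hle : v.1 ≤ w.1) {γ : Boundary X}
    (hv : γ ∈ Cone X v) (hw : γ ∈ Cone X w) : Cone X w ⊆ Cone X v := by
  intro δ hδ i
  have h1 : (i : ℕ) < w.1 := lt_of_lt_of_le i.isLt hle
  have h2 : δ i = w.2 ⟨i, h1⟩ := hδ ⟨i, h1⟩
  have h3 : γ i = w.2 ⟨i, h1⟩ := hw ⟨i, h1⟩
  rw [h2, ← h3]
  exact hv i

theorem cone_disjoint_s17 {m : ℕ} {w w' : Word X m} (hne : w ≠ w') :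
    ∀ γ ∈ Cone X ⟨m, w⟩, γ ∉ Cone X ⟨m, w'⟩ := by
  intro γ h1 h2
  apply hne
  funext i
  exact (h1 i).symm.trans (h2 i)

theorem mem_rist {G : Subgroup (Equiv.Perm (Boundary X))} {v : Vertex X}
    {g : Equiv.Perm (Boundary X)} :
    g ∈ rist X G v ↔ g ∈ G ∧ ∀ γ ∉ Cone X v, g γ = γ := Iff.rfl

theorem rist_le_suppOn (G : Subgroup (Equiv.Perm (Boundary X))) (v : Vertex X) :
    rist X G v ≤ suppOn (Cone X v) := fun _ hg => hg.2

theorem rist_le_group (G : Subgroup (Equiv.Perm (Boundary X))) (v : Vertex X) :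
    rist X G v ≤ G := fun _ hg => hg.1

theorem rist_mono_cone {G : Subgroup (Equiv.Perm (Boundary X))} {v w : Vertex X}
    (h : Cone X w ⊆ Cone X v) : rist X G w ≤ rist X G v :=
  fun g hg => ⟨hg.1, fun γ hγ => hg.2 γ fun hc => hγ (h hc)⟩

theorem rist_inf {N G : Subgroup (Equiv.Perm (Boundary X))} (hNG : N ≤ G) (v : Vertex X) :
    rist X N v = N ⊓ rist X G v := by
  ext g
  exact ⟨fun hg => ⟨hg.1, hNG hg.1, hg.2⟩, fun hg => ⟨hg.1, hg.2.2⟩⟩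

theorem isOpen_cone (v : Vertex X) : IsOpen (Cone X v) := by
  letI : ∀ n, TopologicalSpace (X n) := fun _ => ⊥
  haveI : ∀ n, DiscreteTopology (X n) := fun _ => ⟨rfl⟩
  have h1 : Cone X v = ⋂ i : Fin v.1, (fun γ : Boundary X => γ i) ⁻¹' {v.2 i} := by
    ext γ
    simp [Cone, Set.mem_iInter]
  rw [h1]
  exact isOpen_iInter_of_finite fun i =>
    (continuous_apply (i : ℕ)).isOpen_preimage _ (isOpen_discrete _)

theorem isClosed_cone (v : Vertex X) : IsClosed (Cone X v) := by
  letI : ∀ n, TopologicalSpace (X n) := fun _ => ⊥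
  haveI : ∀ n, DiscreteTopology (X n) := fun _ => ⟨rfl⟩
  have h1 : Cone X v = ⋂ i : Fin v.1, (fun γ : Boundary X => γ i) ⁻¹' {v.2 i} := by
    ext γ
    simp [Cone, Set.mem_iInter]
  rw [h1]
  exact isClosed_iInter fun i =>
    IsClosed.preimage (continuous_apply (i : ℕ)) (isClosed_discrete _)

instance boundaryCompactSpace : CompactSpace (Boundary X) := by
  letI : ∀ n, TopologicalSpace (X n) := fun _ => ⊥
  haveI : ∀ n, Finite (X n) := fun n => Finite.of_fintype _
  exact Pi.compactSpace

end AuxTree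


open StructThm

/-- Let `G ≤ Aut T` be a branch group and `H ∈ L(G)` (a subnormal
subgroup of `G` with finite-index normalizer). If `V` is a set of pairwise incomparable
vertices whose cones cover `Supp(H)`, then in the structure lattice `ℒ(G)` the class of
`H` equals the class of `∏_{v ∈ V} rist_G(v)`, i.e. `H ∼ ∏_{v ∈ V} rist_G(v)`. -/
theorem class_eq_product_of_rists (X : ℕ → Type) [∀ n, Fintype (X n)]
    [∀ n, Nonempty (X n)] (G H : Subgroup (Equiv.Perm (Boundary X)))
    (hG : IsBranch X G) (hH : InL G H) (V : Finset (Vertex X))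
    (hinc : ∀ v ∈ V, ∀ w ∈ V, v ≠ w → Incomparable X v w)
    (hsub : ∀ v ∈ V, Cone X v ⊆ SuppSet X H)
    (hcover : (⋃ v ∈ V, Cone X v) = SuppSet X H) :
    structEquiv H (⨆ v ∈ V, rist X G v) := by
  classical
  obtain ⟨htree, htrans, hristG⟩ := hG
  obtain ⟨hHG, hsubn, hNindex⟩ := hH
  set S := SuppSet X H with hSdef
  set R := ⨆ v ∈ V, rist X G v with hRdef
  -- basic support facts
  have hHsupp : ∀ h ∈ H, h ∈ suppOn S := by
    intro h hh γ hγ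
    by_contra hc
    exact hγ ⟨h, hh, hc⟩
  have hRG : R ≤ G := iSup_le fun v => iSup_le fun _ => rist_le_group X G v
  have hRsupp : R ≤ suppOn S := by
    refine iSup_le fun v => iSup_le fun hv => ?_
    exact le_trans (rist_le_suppOn X G v) (suppOn_mono (hsub v hv))
  -- the finite-index "normalizer inside G"
  set N := Subgroup.normalizer (H : Set (Equiv.Perm (Boundary X))) ⊓ G with hNdef
  have hNG : N ≤ G := inf_le_right
  have hNnorm : ∀ b ∈ N, ∀ a ∈ H, b * a * b⁻¹ ∈ H := by
    intro b hb a ha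
    exact (Subgroup.mem_normalizer_iff.mp hb.1 a).mp ha
  have hNrelG : N.relIndex G ≠ 0 := by
    rw [hNdef, Subgroup.inf_relIndex_right]
    exact hNindex
  -- choose a level m such that every level-m cone inside S is moved off itself by H
  have hmain : ∃ m : ℕ, (∀ v ∈ V, v.1 ≤ m) ∧
      ∀ w : Word X m, Cone X ⟨m, w⟩ ⊆ S →
        ∃ h ∈ H, ∀ γ ∈ Cone X ⟨m, w⟩, h γ ∉ Cone X ⟨m, w⟩ := by
    have hpt : ∀ γ : Boundary X, γ ∈ S → ∃ n : ℕ,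
        ∃ h ∈ H, ∀ δ ∈ Cone X ⟨n, fun i => γ i⟩, h δ ∉ Cone X ⟨n, fun i => γ i⟩ := by
      rintro γ ⟨h, hh, hne⟩
      have hex : ∃ i : ℕ, h γ i ≠ γ i := by
        by_contra hc
        push_neg at hc
        exact hne (funext hc)
      obtain ⟨i, hi⟩ := hex
      refine ⟨i + 1, h, hh, ?_⟩
      intro δ hδ hcon
      have htaut := htree h (hHG hh) (i + 1) γ δ
      have h1 : ∀ j : Fin (i + 1), γ j = δ j := fun j => (hδ j).symm
      have h2 := htaut.mp h1
      exact hi ((h2 ⟨i, Nat.lt_succ_self i⟩).trans (hcon ⟨i, Nat.lt_succ_self i⟩))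
    choose n hmov using hpt
    have hSclosed : IsClosed S := by
      rw [← hcover]
      exact Set.Finite.isClosed_biUnion V.finite_toSet fun v _ => isClosed_cone X v
    have hScompact : IsCompact S := hSclosed.isCompact
    set U : {γ : Boundary X // γ ∈ S} → Set (Boundary X) :=
      fun p => Cone X ⟨n p.1 p.2, fun i => p.1 i⟩ with hUdef
    have hUopen : ∀ p, IsOpen (U p) := fun p => isOpen_cone X _
    have hcov : S ⊆ ⋃ p, U p := by
      intro γ hγ
      exact Set.mem_iUnion.mpr ⟨⟨γ, hγ⟩, fun i => rfl⟩
    obtain ⟨t, ht⟩ := hScompact.elim_finite_subcover U hUopen hcov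
    refine ⟨(t.sup fun p => n p.1 p.2) ⊔ V.sup (fun v => v.1), ?_, ?_⟩
    · intro v hv
      exact le_trans (Finset.le_sup hv) le_sup_right
    · intro w hw
      obtain ⟨γ, hγ⟩ := cone_point X ⟨_, w⟩
      have hγS : γ ∈ S := hw hγ
      obtain ⟨p, hpt', hγp⟩ := Set.mem_iUnion₂.mp (ht hγS)
      have hlev : n p.1 p.2 ≤ (t.sup fun p => n p.1 p.2) ⊔ V.sup (fun v => v.1) :=
        le_trans (Finset.le_sup (f := fun p : {γ : Boundary X // γ ∈ S} => n p.1 p.2) hpt') le_sup_left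
      have hsubc : Cone X ⟨_, w⟩ ⊆ U p := cone_subset X hlev hγp hγ
      obtain ⟨h, hh, hmv⟩ := hmov p.1 p.2
      exact ⟨h, hh, fun δ hδ hcon => hmv δ (hsubc hδ) (hsubc hcon)⟩
  obtain ⟨m, hmV, hmMove⟩ := hmain
  -- dichotomy for level-m cones
  have hnest : ∀ w : Word X m, ∀ γ ∈ Cone X ⟨m, w⟩, γ ∈ S →
      ∃ v ∈ V, Cone X ⟨m, w⟩ ⊆ Cone X v := by
    intro w γ hγ hγS
    rw [← hcover] at hγS
    obtain ⟨v, hv, hγv⟩ := Set.mem_iUnion₂.mp hγS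
    exact ⟨v, hv, cone_subset X (hmV v hv) hγv hγ⟩
  have hdich : ∀ w : Word X m, ¬ Cone X ⟨m, w⟩ ⊆ S → ∀ γ ∈ Cone X ⟨m, w⟩, γ ∉ S := by
    intro w hw γ hγ hγS
    obtain ⟨v, hv, hsubc⟩ := hnest w γ hγ hγS
    refine hw (hsubc.trans ?_)
    rw [← hcover]
    exact Set.subset_biUnion_of_mem hv
  have hWtoR : ∀ w : Word X m, Cone X ⟨m, w⟩ ⊆ S → rist X G ⟨m, w⟩ ≤ R := by
    intro w hw
    obtain ⟨γ, hγ⟩ := cone_point X ⟨m, w⟩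
    obtain ⟨v, hv, hsubc⟩ := hnest w γ hγ (hw hγ)
    exact le_trans (rist_mono_cone X hsubc) (le_iSup₂ (f := fun v (_ : v ∈ V) => rist X G v) v hv)
  -- index types and coproduct homomorphisms
  set ι := {w : Word X m // Cone X ⟨m, w⟩ ⊆ S} with hιdef
  set KG : ι → Subgroup (Equiv.Perm (Boundary X)) := fun i => rist X G ⟨m, i.1⟩ with hKGdef
  have hconedisj : ∀ i j : ι, i ≠ j → ∀ γ ∈ Cone X ⟨m, i.1⟩, γ ∉ Cone X ⟨m, j.1⟩ :=
    fun i j hne => cone_disjoint_s17 X fun hc => hne (Subtype.ext hc)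
  have hcomm : Pairwise fun i j : ι => ∀ x y : Equiv.Perm (Boundary X),
      x ∈ KG i → y ∈ KG j → Commute x y := by
    intro i j hij x y hx hy
    exact commute_of_disjoint (rist_le_suppOn X G _ hx) (rist_le_suppOn X G _ hy)
      (hconedisj i j hij)
  set Φ := Subgroup.noncommPiCoprod hcomm with hΦdef
  -- the full level-m coproduct
  set Ka : Word X m → Subgroup (Equiv.Perm (Boundary X)) := fun w => rist X G ⟨m, w⟩ with hKadef
  have hcomma : Pairwise fun w w' : Word X m => ∀ x y : Equiv.Perm (Boundary X),
      x ∈ Ka w → y ∈ Ka w' → Commute x y := by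
    intro w w' hne x y hx hy
    exact commute_of_disjoint (rist_le_suppOn X G _ hx) (rist_le_suppOn X G _ hy)
      (cone_disjoint_s17 X hne)
  set Φa := Subgroup.noncommPiCoprod hcomma with hΦadef
  have hRistLevel : RistLevel X G m = Φa.range := by
    rw [hΦadef, Subgroup.noncommPiCoprod_range]
    rfl
  have hRmR : Φ.range ≤ R := by
    rw [hΦdef, Subgroup.noncommPiCoprod_range]
    exact iSup_le fun i => hWtoR i.1 i.2
  -- decomposition: an element of the level-m rigid stabilizer supported on S lies in Φ.range
  have hdecomp : ∀ g ∈ RistLevel X G m, g ∈ suppOn S → g ∈ Φ.range := by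
    intro g hg hgs
    rw [hRistLevel] at hg
    obtain ⟨f, rfl⟩ := hg
    have happ := subgroup_noncommPiCoprod_apply hcomma f
    have hvan : ∀ w : Word X m, ¬ Cone X ⟨m, w⟩ ⊆ S → f w = 1 := by
      intro w hw
      have hfix : ∀ γ ∈ Cone X ⟨m, w⟩, (f w : Equiv.Perm (Boundary X)) γ = γ := by
        intro γ hγ
        have h1 : Φa f γ = (f w : Equiv.Perm (Boundary X)) γ := by
          rw [happ]
          exact noncommProd_apply_of_mem Finset.univ (fun w => (f w : Equiv.Perm (Boundary X)))
            (fun w => Cone X ⟨m, w⟩) _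
            (fun w _ => rist_le_suppOn X G _ (f w).2)
            (fun w _ w' _ hne => cone_disjoint_s17 X hne)
            (Finset.mem_univ w) hγ
        have h2 : Φa f γ = γ := hgs γ (hdich w hw γ hγ)
        rw [← h1, h2]
      have hone : (f w : Equiv.Perm (Boundary X)) = 1 := by
        apply Equiv.ext
        intro γ
        by_cases hγ : γ ∈ Cone X ⟨m, w⟩
        · exact hfix γ hγ
        · exact (f w).2.2 γ hγ
      exact Subtype.ext hone
    rw [happ]
    refine Submonoid.noncommProd_mem Φ.range.toSubmonoid _ _ _ ?_
    intro w _
    by_cases hw : Cone X ⟨m, w⟩ ⊆ S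
    · refine ⟨Pi.mulSingle (⟨w, hw⟩ : ι) ⟨(f w : Equiv.Perm (Boundary X)), (f w).2⟩, ?_⟩
      exact Subgroup.noncommPiCoprod_mulSingle (⟨w, hw⟩ : ι) _
    · rw [hvan w hw]
      exact Φ.range.one_mem
  -- Direction A : K_H := RistLevel ⊓ H
  have hKH : RistLevel X G m ⊓ H ≤ H ⊓ R := by
    intro g hg
    exact ⟨hg.2, hRmR (hdecomp g hg.1 (hHsupp g hg.2))⟩
  have hKHrel : (RistLevel X G m ⊓ H).relIndex H ≠ 0 := by
    rw [Subgroup.inf_relIndex_right]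
    intro hc
    exact hristG m (Subgroup.relIndex_eq_zero_of_le_right hHG hc)
  have hcommHR : ⁅RistLevel X G m ⊓ H, RistLevel X G m ⊓ H⁆ ≤ H ⊓ R := by
    rw [Subgroup.commutator_le]
    intro g₁ hg₁ g₂ hg₂
    have m1 := hKH hg₁
    have m2 := hKH hg₂
    rw [commutatorElement_def]
    exact (H ⊓ R).mul_mem ((H ⊓ R).mul_mem ((H ⊓ R).mul_mem m1 m2) ((H ⊓ R).inv_mem m1))
      ((H ⊓ R).inv_mem m2)
  -- Direction B: commutators of rist_N pieces lie in H ⊓ R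
  have hNristH : ∀ i : ι, ∀ x y : Equiv.Perm (Boundary X),
      x ∈ rist X N ⟨m, i.1⟩ → y ∈ rist X N ⟨m, i.1⟩ → ⁅x, y⁆ ∈ H ⊓ R := by
    intro i x y hx hy
    obtain ⟨h, hh, hmv⟩ := hmMove i.1 i.2
    constructor
    · exact commutator_mem_of_moved hNnorm hh hmv hx.1 hy.1
        (rist_le_suppOn X N _ hx) (rist_le_suppOn X N _ hy)
    · have hxR : x ∈ R := hWtoR i.1 i.2 ⟨hNG hx.1, hx.2⟩
      have hyR : y ∈ R := hWtoR i.1 i.2 ⟨hNG hy.1, hy.2⟩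
      rw [commutatorElement_def]
      exact R.mul_mem (R.mul_mem (R.mul_mem hxR hyR) (R.inv_mem hxR)) (R.inv_mem hyR)
  -- K_R
  set P := Subgroup.pi Set.univ (fun i : ι => (rist X N ⟨m, i.1⟩).subgroupOf (KG i)) with hPdef
  set KR := P.map Φ with hKRdef
  have hKRle : KR ≤ Φ.range := Subgroup.map_le_range Φ P
  have hKRleR : KR ≤ R := hKRle.trans hRmR
  have hKRcomm : ⁅KR, KR⁆ ≤ H ⊓ R := by
    rw [Subgroup.commutator_le]
    rintro x ⟨f, hf, rfl⟩ y ⟨f', hf', rfl⟩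
    rw [← map_commutatorElement]
    rw [subgroup_noncommPiCoprod_apply]
    refine Submonoid.noncommProd_mem (H ⊓ R).toSubmonoid _ _ _ ?_
    intro i _
    have hfi : ((f i : Equiv.Perm (Boundary X))) ∈ rist X N ⟨m, i.1⟩ :=
      Subgroup.mem_subgroupOf.mp (hf i (Set.mem_univ i))
    have hf'i : ((f' i : Equiv.Perm (Boundary X))) ∈ rist X N ⟨m, i.1⟩ :=
      Subgroup.mem_subgroupOf.mp (hf' i (Set.mem_univ i))
    have hcoe : ((⁅f, f'⁆ i : Equiv.Perm (Boundary X)))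
        = ⁅(f i : Equiv.Perm (Boundary X)), (f' i : Equiv.Perm (Boundary X))⁆ := rfl
    rw [hcoe]
    exact hNristH i _ _ hfi hf'i
  -- index computations
  have hPind : P.index ≠ 0 := by
    rw [hPdef, index_pi']
    rw [Finset.prod_ne_zero_iff]
    intro i _
    show (rist X N ⟨m, i.1⟩).relIndex (KG i) ≠ 0
    rw [rist_inf X hNG, Subgroup.inf_relIndex_right]
    intro hc
    exact hNrelG (Subgroup.relIndex_eq_zero_of_le_right (rist_le_group X G _) hc)
  have hKRrel1 : KR.relIndex Φ.range ≠ 0 := by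
    have h1 : (KR.comap Φ).index = KR.relIndex Φ.range := Subgroup.index_comap KR Φ
    rw [← h1, hKRdef, Subgroup.comap_map_eq]
    intro hc
    have h2 : (P ⊔ Φ.ker).index ∣ P.index := Subgroup.index_dvd_of_le le_sup_left
    rw [hc] at h2
    exact hPind (zero_dvd_iff.mp h2)
  have hRmRrel : Φ.range.relIndex R ≠ 0 := by
    have h1 : RistLevel X G m ⊓ R ≤ Φ.range := fun g hg => hdecomp g hg.1 (hRsupp hg.2)
    have h2 : (RistLevel X G m ⊓ R).relIndex R ≠ 0 := by
      rw [Subgroup.inf_relIndex_right]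
      intro hc
      exact hristG m (Subgroup.relIndex_eq_zero_of_le_right hRG hc)
    intro hc
    exact h2 (Subgroup.relIndex_eq_zero_of_le_left h1 hc)
  have hKRrel : KR.relIndex R ≠ 0 := by
    have h1 := Subgroup.relIndex_mul_relIndex KR Φ.range R hKRle hRmR
    rw [← h1]
    exact mul_ne_zero hKRrel1 hRmRrel
  exact ⟨⟨inf_le_left, RistLevel X G m ⊓ H, inf_le_right, hKHrel, hcommHR⟩,
    ⟨inf_le_right, KR, hKRleR, hKRrel, hKRcomm⟩⟩
end
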